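/- arXiv:math/9712267 — 3 statements merged into one kernel-verified Lean document; each statement's English description precedes it below -/
import Mathlib

section
/- Let α > 0, let λ be a Young diagram with n = |λ| boxes, and let u, v be arbitrary complex numbers. Then ∑_{Λ : λ ↗ Λ} (c_α(b) + u)(c_α(b) + v) · κ_α(λ,Λ) · φ(Λ) = (nα + uv) · φ(λ), where the sum runs over all Young diagrams Λ obtained from λ by adding one box b = Λ∖λ. -/
/-- `ν` is obtained from `μ` by adding a single box (`μ ↗ ν`). -/
def YDCovers (μ ν : YoungDiagram) : Prop :=
  ∃ c ∉ μ.cells, ν.cells = insert c μ.cells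

/-- The arm length `a(b) = λᵢ − j` of a box `b = (i,j)` (0-indexed). -/
def armLen (μ : YoungDiagram) (b : ℕ × ℕ) : ℕ := μ.rowLen b.1 - b.2 - 1

/-- The leg length `l(b) = λ′ⱼ − i` of a box `b = (i,j)` (0-indexed). -/
def legLen (μ : YoungDiagram) (b : ℕ × ℕ) : ℕ := μ.colLen b.2 - b.1 - 1

/-- The Pieri multiplicity `κ_α(μ,ν)` for Jack symmetric functions, for `μ ↗ ν`:
the product over the boxes `b` of the column of `μ` containing the new box
`b₀ = ν ∖ μ` of `[(a(b)α+l(b)+2)((a(b)+1)α+l(b))] / [((a(b)+1)α+l(b)+1)(a(b)α+l(b)+1)]`,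
arm and leg lengths taken in `μ`. -/
noncomputable def jackMult (α : ℝ) (μ ν : YoungDiagram) : ℝ :=
  ∏ b0 ∈ ν.cells \ μ.cells, ∏ b ∈ μ.cells.filter (fun c => c.2 = b0.2),
    (((armLen μ b : ℝ) * α + (legLen μ b : ℝ) + 2) *
        (((armLen μ b : ℝ) + 1) * α + (legLen μ b : ℝ))) /
      ((((armLen μ b : ℝ) + 1) * α + (legLen μ b : ℝ) + 1) *
        ((armLen μ b : ℝ) * α + (legLen μ b : ℝ) + 1))

/-- `φ(μ) = ∏_{b∈μ} (a(b)α + l(b) + 1)⁻¹`. -/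
noncomputable def phiJack (α : ℝ) (μ : YoungDiagram) : ℝ :=
  ∏ b ∈ μ.cells, ((armLen μ b : ℝ) * α + (legLen μ b : ℝ) + 1)⁻¹

/-- The `α`-content `c_α(b) = α(j−1) − (i−1)` of a box `b = (i,j)` (0-indexed: `αj − i`). -/
noncomputable def alphaContent (α : ℝ) (b : ℕ × ℕ) : ℝ := α * (b.2 : ℝ) - (b.1 : ℝ)

/-!
Adding the box at the end of row `i` changes only the hooks in row `i` and in column `λᵢ`. Write
`xₜ = αλₜ − t` for the content of the outer corner of row `t`, for `0 ≤ t ≤ N` with `N` the number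
of rows (so `x_N = −N`). The row factors telescope along the strips of columns of equal height, and
`κ_α(λ,Λ) φ(Λ) / φ(λ) = W(xᵢ) / ∏_{t ≠ i} (xᵢ − xₜ)` with `W(X) = ∏_{t<N} (X − xₜ + 1)`; for a row
without an addable box `W(xᵢ) = 0`, because then `x_{i−1} = xᵢ + 1`. The sum is therefore the
Lagrange interpolation sum of `(X + u)(X + v) W` at the nodes `x₀, …, x_N`, i.e. the top coefficient
of its remainder modulo `M = ∏_{t ≤ N} (X − xₜ)`. Since `W(X) = V(X + 1)` for
`V = ∏_{t<N} (X − xₜ)` and `M = (X + N) V`, the polynomial `XW − M` has degree `< N`, so the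
remainder is `(X + u + v)(XW − M) + uvW`, whose top coefficient is
`uv + ∑_{t<N} (xₜ + t) = uv + α|λ|`.
-/

open Finset Polynomial Lagrange


section Interpolation

variable {ι F : Type*} [Field F] [DecidableEq ι]

theorem Lagrange.sum_eval_mul_nodalWeight {s : Finset ι} {v : ι → F} (hvs : Set.InjOn v s)
    {f : F[X]} (hf : f.degree < #s) :
    ∑ i ∈ s, f.eval (v i) * nodalWeight s v i = f.coeff (#s - 1) := by
  conv_rhs => rw [eq_interpolate hvs hf, interpolate_apply, finsetSum_coeff]
  refine sum_congr rfl fun i hi => ?_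
  have hlead : (nodal (s.erase i) v).coeff (#s - 1) = 1 := by
    simpa [card_erase_of_mem hi] using (nodal_monic (s := s.erase i) (v := v)).coeff_natDegree
  rw [coeff_C_mul, basis_eq_prod_sub_inv_mul_nodal_div hi, ← nodal_erase_eq_nodal_div hi,
    coeff_C_mul, hlead, mul_one, mul_comm]

end Interpolation

section ShiftDefect

variable {R : Type*} [CommRing R]

/-- With `V = ∏_{t<N} (X - yₜ)`, this is `X V(X + 1) - (X + N) V(X)`, whose two top coefficients
cancel. -/
noncomputable def nodalShiftDefect (y : ℕ → R) (N : ℕ) : R[X] :=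
  X * nodal (range N) (fun t => y t - 1) - (X + C (N : R)) * nodal (range N) y

theorem nodalShiftDefect_zero (y : ℕ → R) : nodalShiftDefect y 0 = 0 := by
  simp [nodalShiftDefect]

theorem nodalShiftDefect_succ (y : ℕ → R) (N : ℕ) :
    nodalShiftDefect y (N + 1) =
      (X - C (y N - 1)) * nodalShiftDefect y N + C (N + y N) * nodal (range N) y := by
  simp only [nodalShiftDefect, nodal, prod_range_succ, Nat.cast_succ, C_add, C_sub, C_1]
  ring

theorem coeff_nodal_range_self [Nontrivial R] (y : ℕ → R) (N : ℕ) :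
    (nodal (range N) y).coeff N = 1 := by
  simpa using (nodal_monic (s := range N) (v := y)).coeff_natDegree

theorem degree_nodalShiftDefect_lt [Nontrivial R] (y : ℕ → R) (N : ℕ) :
    (nodalShiftDefect y N).degree < N := by
  induction N with
  | zero => simp [nodalShiftDefect_zero]
  | succ N ih =>
    rw [degree_lt_iff_coeff_zero] at ih ⊢
    intro m hm
    obtain ⟨k, rfl⟩ : ∃ k, m = k + 1 := ⟨m - 1, by omega⟩
    rw [nodalShiftDefect_succ, sub_mul, coeff_add, coeff_sub, coeff_X_mul, coeff_C_mul,
      coeff_C_mul, ih k (by omega), ih (k + 1) (by omega),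
      coeff_eq_zero_of_natDegree_lt (by simp; omega)]
    ring

theorem coeff_X_mul_nodalShiftDefect [Nontrivial R] (y : ℕ → R) (N : ℕ) :
    (X * nodalShiftDefect y N).coeff N = ∑ t ∈ range N, (y t + t) := by
  induction N with
  | zero => simp [nodalShiftDefect_zero]
  | succ N ih =>
    have hN : (nodalShiftDefect y N).coeff N = 0 :=
      coeff_eq_zero_of_degree_lt (degree_nodalShiftDefect_lt y N)
    rw [coeff_X_mul, nodalShiftDefect_succ, sub_mul, coeff_add, coeff_sub, coeff_C_mul,
      coeff_C_mul, ih, hN, coeff_nodal_range_self, sum_range_succ]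
    ring

end ShiftDefect

section Moments

variable {F : Type*} [Field F]

theorem sum_mul_prod_sub_add_one_mul_nodalWeight {N : ℕ} {x : ℕ → F}
    (hx : Set.InjOn x (range (N + 1))) (hxN : x N = -N) (u v : F) :
    ∑ i ∈ range (N + 1), (x i + u) * (x i + v) * (∏ t ∈ range N, (x i - x t + 1)) *
        nodalWeight (range (N + 1)) x i =
      ∑ t ∈ range N, (x t + t) + u * v := by
  set D := nodalShiftDefect x N
  set W := nodal (range N) (fun t => x t - 1)
  have hD : D.degree < N := degree_nodalShiftDefect_lt x N
  have hW : W.natDegree = N := by simp [W]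
  -- `(X + u)(X + v) W ≡ (X + u + v) D + uv W` modulo the nodal polynomial of `x₀, …, x_N`.
  set r := (X + C (u + v)) * D + C (u * v) * W
  have hnodal : nodal (range (N + 1)) x = (X + C (N : F)) * nodal (range N) x := by
    rw [nodal, prod_range_succ, hxN, C_neg, sub_neg_eq_add, mul_comm]; rfl
  have heval : ∀ i ∈ range (N + 1),
      (x i + u) * (x i + v) * ∏ t ∈ range N, (x i - x t + 1) = r.eval (x i) := by
    intro i hi
    have hXW : x i * W.eval (x i) = D.eval (x i) := by
      have := congrArg (eval (x i)) (show X * W = nodal (range (N + 1)) x + D by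
        rw [hnodal]; simp only [D, W, nodalShiftDefect]; ring)
      simpa [eval_nodal_at_node hi] using this
    have hWx : W.eval (x i) = ∏ t ∈ range N, (x i - x t + 1) := by
      simp only [W, eval_nodal]; exact prod_congr rfl fun t _ => by ring
    simp only [r, eval_add, eval_mul, eval_X, eval_C, ← hXW, ← hWx]
    ring
  have hr : r.degree < #(range (N + 1)) := by
    rw [card_range, degree_lt_iff_coeff_zero]
    intro m hm
    obtain ⟨k, rfl⟩ : ∃ k, m = k + 1 := ⟨m - 1, by omega⟩
    rw [degree_lt_iff_coeff_zero] at hD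
    simp only [r, add_mul, coeff_add, coeff_X_mul, coeff_C_mul, hD k (by omega),
      hD (k + 1) (by omega), coeff_eq_zero_of_natDegree_lt (show W.natDegree < k + 1 by omega)]
    ring
  rw [sum_congr rfl fun i hi => by rw [heval i hi], sum_eval_mul_nodalWeight hx hr, card_range,
    Nat.add_sub_cancel]
  have hX : (X * D).coeff N = ∑ t ∈ range N, (x t + t) := coeff_X_mul_nodalShiftDefect x N
  simp only [r, add_mul, coeff_add, coeff_C_mul, hX, coeff_eq_zero_of_degree_lt hD,
    coeff_nodal_range_self, W]
  ring

end Moments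

namespace Finset

theorem prod_range_eq_prod_Ico_prod_Ico {M : Type*} [CommMonoid M] (f : ℕ → M) {r : ℕ → ℕ}
    (hr : Antitone r) {N : ℕ} (hN : r N = 0) {i : ℕ} (hi : i ≤ N) :
    ∏ j ∈ range (r i), f j = ∏ s ∈ Ico i N, ∏ j ∈ Ico (r (s + 1)) (r s), f j := by
  induction hi using Nat.decreasingInduction with
  | self => simp [hN]
  | of_succ k hk ih =>
    rw [← prod_range_mul_prod_Ico f (hr k.le_succ), ih, prod_eq_prod_Ico_succ_bot hk, mul_comm]

theorem prod_Ico_div_of_ne_zero {G₀ : Type*} [CommGroupWithZero G₀] (g : ℕ → G₀) {m n : ℕ}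
    (hmn : m ≤ n) (hg : ∀ k, m ≤ k → k ≤ n → g k ≠ 0) :
    ∏ k ∈ Ico m n, g (k + 1) / g k = g n / g m := by
  induction n, hmn using Nat.le_induction with
  | base => simp [div_self (hg m le_rfl le_rfl)]
  | succ n hmn ih =>
    rw [prod_Ico_succ_top hmn, ih fun k h₁ h₂ => hg k h₁ (by omega),
      mul_comm, div_mul_div_cancel₀ (hg n hmn (by omega))]

theorem prod_Ico_div_succ_mul_prod_range_div {G : Type*} [DivisionCommMonoid G] (a b : ℕ → G)
    {i N : ℕ} (hi : i ≤ N) :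
    (∏ s ∈ Ico i N, a s / b (s + 1)) * ∏ s ∈ range i, a s / b s =
      (∏ s ∈ range N, a s) * ∏ t ∈ (range (N + 1)).erase i, (b t)⁻¹ := by
  have herase : (range (N + 1)).erase i = range i ∪ Ico (i + 1) (N + 1) := by
    ext t; simp only [mem_erase, mem_range, mem_union, mem_Ico]; omega
  have hdisj : Disjoint (range i) (Ico (i + 1) (N + 1)) :=
    disjoint_left.mpr fun t h₁ h₂ => by simp only [mem_range, mem_Ico] at h₁ h₂; omega
  rw [herase, prod_union hdisj, ← prod_Ico_add' (fun t => (b t)⁻¹), ← prod_range_mul_prod_Ico a hi]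
  simp only [div_eq_mul_inv, prod_mul_distrib]
  ac_rfl

end Finset

namespace YoungDiagram

variable {μ : YoungDiagram} {i : ℕ}

def IsAddableRow (μ : YoungDiagram) (i : ℕ) : Prop :=
  IsLowerSet (↑(insert (i, μ.rowLen i) μ.cells) : Set (ℕ × ℕ))

open Classical in
/-- Junk value `μ` when row `i` has no addable box. -/
noncomputable def addBox (μ : YoungDiagram) (i : ℕ) : YoungDiagram :=
  if h : μ.IsAddableRow i then ⟨insert (i, μ.rowLen i) μ.cells, h⟩ else μ

theorem rowLen_notMem (μ : YoungDiagram) (i : ℕ) : (i, μ.rowLen i) ∉ μ := by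
  simp [mem_iff_lt_rowLen]

theorem cells_addBox (h : μ.IsAddableRow i) :
    (μ.addBox i).cells = insert (i, μ.rowLen i) μ.cells := by
  rw [addBox, dif_pos h]

theorem mem_addBox (h : μ.IsAddableRow i) {c : ℕ × ℕ} :
    c ∈ μ.addBox i ↔ c = (i, μ.rowLen i) ∨ c ∈ μ := by
  rw [← mem_cells, cells_addBox h, mem_insert, mem_cells]

theorem cells_addBox_sdiff (h : μ.IsAddableRow i) :
    (μ.addBox i).cells \ μ.cells = {(i, μ.rowLen i)} := by
  rw [cells_addBox h, insert_sdiff_cancel (by simpa using μ.rowLen_notMem i)]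

theorem isAddableRow_of_rowLen_lt (h : i = 0 ∨ μ.rowLen i < μ.rowLen (i - 1)) :
    μ.IsAddableRow i := by
  rintro ⟨a₁, a₂⟩ ⟨b₁, b₂⟩ hba hb
  have hb₁ : b₁ ≤ a₁ := hba.1
  have hb₂ : b₂ ≤ a₂ := hba.2
  simp only [coe_insert, Set.mem_insert_iff, Prod.mk.injEq, mem_coe, mem_cells] at hb ⊢
  rcases hb with ⟨rfl, rfl⟩ | hb
  · rw [mem_iff_lt_rowLen]
    by_cases hb₁i : b₁ = a₁
    · subst hb₁i; omega
    · have := μ.rowLen_anti b₁ (a₁ - 1) (by omega)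
      omega
  · exact Or.inr (μ.isLowerSet hba hb)

theorem IsAddableRow.colLen_rowLen (h : μ.IsAddableRow i) : μ.colLen (μ.rowLen i) = i := by
  refine eq_of_forall_lt_iff fun s => ⟨fun hs => ?_, fun hs => ?_⟩
  · by_contra! hsi
    exact μ.rowLen_notMem i (μ.up_left_mem hsi le_rfl (mem_iff_lt_colLen.mpr hs))
  · have hmem : (s, μ.rowLen i) ∈ (↑(insert (i, μ.rowLen i) μ.cells) : Set (ℕ × ℕ)) :=
      h (show (s, μ.rowLen i) ≤ (i, μ.rowLen i) from ⟨hs.le, le_rfl⟩) (by simp)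
    simp only [coe_insert, Set.mem_insert_iff, Prod.mk.injEq, mem_coe, mem_cells] at hmem
    rw [← mem_iff_lt_colLen]
    exact hmem.resolve_left (by omega)

theorem IsAddableRow.le_colLen_zero (h : μ.IsAddableRow i) : i ≤ μ.colLen 0 :=
  h.colLen_rowLen ▸ μ.colLen_anti 0 _ (Nat.zero_le _)

theorem rowLen_colLen_zero (μ : YoungDiagram) : μ.rowLen (μ.colLen 0) = 0 := by
  by_contra h
  exact (lt_irrefl _) (mem_iff_lt_colLen.mp (mem_iff_lt_rowLen.mpr (Nat.pos_of_ne_zero h)))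

theorem card_eq_sum_rowLen (μ : YoungDiagram) :
    μ.card = ∑ t ∈ range (μ.colLen 0), μ.rowLen t := by
  refine (card_eq_sum_card_fiberwise (f := Prod.fst) fun c hc => ?_).trans
    (sum_congr rfl fun t _ => ?_)
  · have := μ.colLen_anti 0 c.2 (Nat.zero_le _)
    simpa using (mem_iff_lt_colLen.mp ((mem_cells _).mp hc)).trans_le this
  · rw [μ.rowLen_eq_card, row]

theorem rowLen_addBox (h : μ.IsAddableRow i) (t : ℕ) :
    (μ.addBox i).rowLen t = μ.rowLen t + if t = i then 1 else 0 := by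
  refine eq_of_forall_lt_iff fun j => ?_
  rw [← mem_iff_lt_rowLen, mem_addBox h, mem_iff_lt_rowLen, Prod.mk.injEq]
  split_ifs with ht <;> [subst ht; skip] <;> omega

theorem colLen_addBox (h : μ.IsAddableRow i) (j : ℕ) :
    (μ.addBox i).colLen j = μ.colLen j + if j = μ.rowLen i then 1 else 0 := by
  refine eq_of_forall_lt_iff fun s => ?_
  rw [← mem_iff_lt_colLen, mem_addBox h, mem_iff_lt_colLen, Prod.mk.injEq]
  split_ifs with hj
  · subst hj; rw [h.colLen_rowLen]; omega
  · omega

theorem addBox_injOn (μ : YoungDiagram) : Set.InjOn μ.addBox {i | μ.IsAddableRow i} := by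
  intro i hi j hj hij
  have hmem : (i, μ.rowLen i) ∈ μ.addBox j := hij ▸ (mem_addBox hi).mpr (Or.inl rfl)
  rcases (mem_addBox hj).mp hmem with h | h
  · exact congrArg Prod.fst h
  · exact absurd h (μ.rowLen_notMem i)

end YoungDiagram

open YoungDiagram in
theorem ydCovers_iff_exists_addBox {μ Λ : YoungDiagram} :
    YDCovers μ Λ ↔ ∃ i, μ.IsAddableRow i ∧ Λ = μ.addBox i := by
  constructor
  · rintro ⟨⟨i, j⟩, hc, hΛ⟩
    have hmem : ∀ d, d ∈ Λ ↔ d = (i, j) ∨ d ∈ μ := fun d => by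
      rw [← mem_cells, hΛ, mem_insert, mem_cells]
    -- the new box is the first cell of row `i` missing from `μ`
    have hj : j = μ.rowLen i := by
      have hrow : (i, μ.rowLen i) ∈ Λ :=
        Λ.up_left_mem le_rfl (not_lt.mp fun hlt => hc (mem_iff_lt_rowLen.mpr hlt))
          ((hmem _).mpr (Or.inl rfl))
      rcases (hmem _).mp hrow with h | h
      · exact (congrArg Prod.snd h).symm
      · exact absurd h (μ.rowLen_notMem i)
    subst hj
    have hadd : μ.IsAddableRow i := by simpa only [IsAddableRow, ← hΛ] using Λ.isLowerSet
    exact ⟨i, hadd, YoungDiagram.ext (hΛ.trans (cells_addBox hadd).symm)⟩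
  · rintro ⟨i, hi, rfl⟩
    exact ⟨_, by simpa using μ.rowLen_notMem i, cells_addBox hi⟩

open Classical in
theorem finsum_ydCovers_eq_sum_range {M : Type*} [AddCommMonoid M] (μ : YoungDiagram)
    (g : YoungDiagram → M) :
    ∑ᶠ Λ ∈ {Λ | YDCovers μ Λ}, g Λ =
      ∑ i ∈ range (μ.colLen 0 + 1), if μ.IsAddableRow i then g (μ.addBox i) else 0 := by
  have hcovers : {Λ | YDCovers μ Λ} =
      ↑(((range (μ.colLen 0 + 1)).filter μ.IsAddableRow).image μ.addBox) := by
    ext Λ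
    simp only [Set.mem_ofPred_eq, ydCovers_iff_exists_addBox, coe_image, coe_filter, mem_range,
      Set.mem_image]
    exact exists_congr fun i =>
      ⟨fun ⟨hi, hΛ⟩ => ⟨⟨Nat.lt_succ_of_le hi.le_colLen_zero, hi⟩, hΛ.symm⟩,
        fun ⟨⟨_, hi⟩, hΛ⟩ => ⟨hi, hΛ.symm⟩⟩
  rw [hcovers, finsum_mem_coe_finset,
    sum_image (s := (range (μ.colLen 0 + 1)).filter μ.IsAddableRow)
      (μ.addBox_injOn.mono fun i hi => (mem_filter.mp hi).2), sum_filter]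

namespace YoungDiagram

variable {μ : YoungDiagram} {i : ℕ} {α : ℝ}

noncomputable def rowContent (α : ℝ) (μ : YoungDiagram) (t : ℕ) : ℝ :=
  alphaContent α (t, μ.rowLen t)

noncomputable def colContent (α : ℝ) (μ : YoungDiagram) (j : ℕ) : ℝ :=
  alphaContent α (μ.colLen j, j)

noncomputable def jackHook (α : ℝ) (μ : YoungDiagram) (b : ℕ × ℕ) : ℝ :=
  (armLen μ b : ℝ) * α + (legLen μ b : ℝ) + 1

theorem jackHook_pos (hα : 0 ≤ α) (μ : YoungDiagram) (b : ℕ × ℕ) : 0 < μ.jackHook α b := by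
  unfold jackHook; positivity

theorem jackHook_eq {b : ℕ × ℕ} (hb : b ∈ μ) :
    μ.jackHook α b = μ.rowContent α b.1 - μ.colContent α b.2 - α := by
  have hr := mem_iff_lt_rowLen.mp hb
  have hc := mem_iff_lt_colLen.mp hb
  simp only [jackHook, armLen, legLen, rowContent, colContent, alphaContent]
  rw [Nat.cast_sub (by omega), Nat.cast_sub (by omega), Nat.cast_sub (by omega),
    Nat.cast_sub (by omega)]
  push_cast
  ring

theorem rowContent_addBox (h : μ.IsAddableRow i) (t : ℕ) :
    (μ.addBox i).rowContent α t = μ.rowContent α t + if t = i then α else 0 := by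
  simp only [rowContent, alphaContent, rowLen_addBox h]
  split_ifs <;> push_cast <;> ring

theorem colContent_addBox (h : μ.IsAddableRow i) (j : ℕ) :
    (μ.addBox i).colContent α j = μ.colContent α j - if j = μ.rowLen i then 1 else 0 := by
  simp only [colContent, alphaContent, colLen_addBox h]
  split_ifs <;> push_cast <;> ring

theorem IsAddableRow.colContent_rowLen (h : μ.IsAddableRow i) :
    μ.colContent α (μ.rowLen i) = μ.rowContent α i := by
  rw [colContent, h.colLen_rowLen, rowContent]

theorem jackHook_addBox (h : μ.IsAddableRow i) {b : ℕ × ℕ} (hb : b ∈ μ) :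
    (μ.addBox i).jackHook α b =
      μ.jackHook α b + (if b.1 = i then α else 0) + if b.2 = μ.rowLen i then 1 else 0 := by
  rw [jackHook_eq ((mem_addBox h).mpr (Or.inr hb)), jackHook_eq hb, rowContent_addBox h,
    colContent_addBox h]
  ring

theorem jackHook_addBox_self (h : μ.IsAddableRow i) :
    (μ.addBox i).jackHook α (i, μ.rowLen i) = 1 := by
  rw [jackHook_eq ((mem_addBox h).mpr (Or.inl rfl)), rowContent_addBox h, colContent_addBox h,
    h.colContent_rowLen]
  simp

theorem phiJack_addBox (h : μ.IsAddableRow i) :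
    phiJack α (μ.addBox i) = ∏ b ∈ μ.cells, ((μ.addBox i).jackHook α b)⁻¹ := by
  change ∏ b ∈ (μ.addBox i).cells, ((μ.addBox i).jackHook α b)⁻¹ = _
  rw [cells_addBox h, prod_insert (by simpa using μ.rowLen_notMem i), jackHook_addBox_self h,
    inv_one, one_mul]

theorem jackMult_addBox (h : μ.IsAddableRow i) :
    jackMult α μ (μ.addBox i) = ∏ b ∈ μ.col (μ.rowLen i),
      (μ.jackHook α b + 1) * (μ.jackHook α b + α - 1) /
        ((μ.jackHook α b + α) * μ.jackHook α b) := by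
  rw [jackMult, cells_addBox_sdiff h, prod_singleton, col]
  refine prod_congr rfl fun b _ => ?_
  simp only [jackHook]
  congr 1 <;> ring

theorem jackMult_mul_phiJack_addBox_eq_prod_hooks (hα : 0 ≤ α) (h : μ.IsAddableRow i) :
    jackMult α μ (μ.addBox i) * phiJack α (μ.addBox i) =
      phiJack α μ * (∏ b ∈ μ.row i, μ.jackHook α b / (μ.jackHook α b + α)) *
        ∏ b ∈ μ.col (μ.rowLen i), (μ.jackHook α b + α - 1) / (μ.jackHook α b + α) := by
  change _ = (∏ b ∈ μ.cells, (μ.jackHook α b)⁻¹) * _ * _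
  rw [jackMult_addBox h, phiJack_addBox h, col, row, prod_filter, prod_filter, prod_filter,
    ← prod_mul_distrib, ← prod_mul_distrib, ← prod_mul_distrib]
  refine prod_congr rfl fun b hb => ?_
  have hb : b ∈ μ := (mem_cells b).mp hb
  have hpos := μ.jackHook_pos hα b
  rw [jackHook_addBox h hb]
  by_cases h₁ : b.1 = i <;> by_cases h₂ : b.2 = μ.rowLen i
  · obtain ⟨b₁, b₂⟩ := b
    simp only at h₁ h₂
    subst h₁ h₂
    exact absurd hb (μ.rowLen_notMem b₁)
  all_goals simp only [h₁, h₂, if_true, if_false, add_zero, mul_one, one_mul]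
  · field_simp
  · field_simp

theorem jackMult_mul_phiJack_addBox_eq_prod_contents (hα : 0 ≤ α) (h : μ.IsAddableRow i) :
    jackMult α μ (μ.addBox i) * phiJack α (μ.addBox i) =
      phiJack α μ *
        (∏ j ∈ range (μ.rowLen i), (μ.rowContent α i - μ.colContent α j - α) /
          (μ.rowContent α i - μ.colContent α j)) *
        ∏ s ∈ range i, (μ.rowContent α i - μ.rowContent α s + 1) /
          (μ.rowContent α i - μ.rowContent α s) := by
  rw [jackMult_mul_phiJack_addBox_eq_prod_hooks hα h, row_eq_prod, col_eq_prod, h.colLen_rowLen,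
    prod_product, prod_product, prod_singleton]
  simp only [prod_singleton]
  congr 1
  · refine congrArg _ (prod_congr rfl fun j hj => ?_)
    rw [jackHook_eq (mem_iff_lt_rowLen.mpr (mem_range.mp hj))]
    congr 1; ring
  · refine prod_congr rfl fun s hs => ?_
    rw [jackHook_eq (mem_iff_lt_colLen.mpr (by rw [h.colLen_rowLen]; exact mem_range.mp hs)),
      h.colContent_rowLen, ← neg_div_neg_eq]
    congr 1 <;> ring

theorem colLen_eq_succ_of_mem_Ico {s j : ℕ} (hj : j ∈ Ico (μ.rowLen (s + 1)) (μ.rowLen s)) :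
    μ.colLen j = s + 1 := by
  rw [mem_Ico] at hj
  refine eq_of_forall_lt_iff fun t => ?_
  rw [← mem_iff_lt_colLen, mem_iff_lt_rowLen]
  constructor
  · intro ht
    by_contra! hst
    have := μ.rowLen_anti (s + 1) t hst
    omega
  · intro ht
    have := μ.rowLen_anti t s (by omega)
    omega

/-- The columns `j ∈ [λ_{s+1}, λ_s)` all have height `s + 1`, so these factors telescope. -/
theorem prod_Ico_rowLen_succ (hα : 0 ≤ α) {s : ℕ} (his : i ≤ s) :
    ∏ j ∈ Ico (μ.rowLen (s + 1)) (μ.rowLen s),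
        (μ.rowContent α i - μ.colContent α j - α) / (μ.rowContent α i - μ.colContent α j) =
      (μ.rowContent α i - μ.rowContent α s + 1) /
        (μ.rowContent α i - μ.rowContent α (s + 1)) := by
  set G : ℕ → ℝ := fun q => μ.rowContent α i - α * q + (s + 1)
  have hG : ∀ q, q ≤ μ.rowLen s → G q ≠ 0 := by
    intro q hq
    have hq' : (q : ℝ) ≤ μ.rowLen i := by exact_mod_cast hq.trans (μ.rowLen_anti i s his)
    have hsi : (i : ℝ) ≤ s := by exact_mod_cast his
    have : 0 ≤ α * (μ.rowLen i - q) := mul_nonneg hα (by linarith)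
    simp only [G, rowContent, alphaContent]
    nlinarith
  rw [prod_congr rfl fun j hj => show _ = G (j + 1) / G j by
      simp only [G, colContent, alphaContent, colLen_eq_succ_of_mem_Ico hj]; push_cast; ring_nf,
    prod_Ico_div_of_ne_zero G (μ.rowLen_anti s (s + 1) s.le_succ)
      fun q _ hq => hG q hq]
  simp only [G, rowContent, alphaContent]
  push_cast
  ring_nf

theorem prod_range_rowLen (hα : 0 ≤ α) (hi : i ≤ μ.colLen 0) :
    ∏ j ∈ range (μ.rowLen i),
        (μ.rowContent α i - μ.colContent α j - α) / (μ.rowContent α i - μ.colContent α j) =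
      ∏ s ∈ Ico i (μ.colLen 0), (μ.rowContent α i - μ.rowContent α s + 1) /
        (μ.rowContent α i - μ.rowContent α (s + 1)) := by
  rw [prod_range_eq_prod_Ico_prod_Ico _ (fun a b hab => μ.rowLen_anti a b hab)
    μ.rowLen_colLen_zero hi]
  exact prod_congr rfl fun s hs => prod_Ico_rowLen_succ hα (mem_Ico.mp hs).1

theorem jackMult_mul_phiJack_addBox (hα : 0 ≤ α) (h : μ.IsAddableRow i) :
    jackMult α μ (μ.addBox i) * phiJack α (μ.addBox i) =
      phiJack α μ * ((∏ t ∈ range (μ.colLen 0), (μ.rowContent α i - μ.rowContent α t + 1)) *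
        Lagrange.nodalWeight (range (μ.colLen 0 + 1)) (μ.rowContent α) i) := by
  rw [jackMult_mul_phiJack_addBox_eq_prod_contents hα h, prod_range_rowLen hα h.le_colLen_zero,
    mul_assoc, prod_Ico_div_succ_mul_prod_range_div
      (fun s => μ.rowContent α i - μ.rowContent α s + 1)
      (fun s => μ.rowContent α i - μ.rowContent α s) h.le_colLen_zero, nodalWeight]

theorem prod_rowContent_sub_add_one_eq_zero (h : ¬ μ.IsAddableRow i) {N : ℕ} (hi : i ≤ N) :
    ∏ t ∈ range N, (μ.rowContent α i - μ.rowContent α t + 1) = 0 := by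
  have hi₀ : i ≠ 0 := fun h₀ => h (isAddableRow_of_rowLen_lt (Or.inl h₀))
  have hrow : μ.rowLen (i - 1) = μ.rowLen i :=
    le_antisymm (not_lt.mp fun hlt => h (isAddableRow_of_rowLen_lt (Or.inr hlt)))
      (μ.rowLen_anti _ _ (Nat.sub_le i 1))
  refine prod_eq_zero (mem_range.mpr (show i - 1 < N by omega)) ?_
  simp only [rowContent, alphaContent, hrow, Nat.cast_pred (Nat.pos_of_ne_zero hi₀)]
  ring

theorem rowContent_strictAnti (hα : 0 ≤ α) (μ : YoungDiagram) : StrictAnti (μ.rowContent α) := by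
  intro s t hst
  have : α * μ.rowLen t ≤ α * μ.rowLen s :=
    mul_le_mul_of_nonneg_left (by exact_mod_cast μ.rowLen_anti s t hst.le) hα
  have : (s : ℝ) < t := by exact_mod_cast hst
  simp only [rowContent, alphaContent]
  linarith

theorem ite_summand_addBox_eq [Decidable (μ.IsAddableRow i)] (hα : 0 ≤ α) (u v : ℂ)
    (hi : i ≤ μ.colLen 0) :
    (if μ.IsAddableRow i then
      (∑ b ∈ (μ.addBox i).cells \ μ.cells,
          ((alphaContent α b : ℂ) + u) * ((alphaContent α b : ℂ) + v)) *
        (jackMult α μ (μ.addBox i) : ℂ) * (phiJack α (μ.addBox i) : ℂ) else 0) =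
      ((μ.rowContent α i : ℂ) + u) * ((μ.rowContent α i : ℂ) + v) *
        (∏ t ∈ range (μ.colLen 0), ((μ.rowContent α i : ℂ) - μ.rowContent α t + 1)) *
        nodalWeight (range (μ.colLen 0 + 1)) (fun t => (μ.rowContent α t : ℂ)) i *
        (phiJack α μ : ℂ) := by
  split_ifs with h
  · rw [cells_addBox_sdiff h, sum_singleton, mul_assoc, ← Complex.ofReal_mul,
      jackMult_mul_phiJack_addBox hα h, rowContent]
    push_cast [nodalWeight]
    ring
  · have hzero :
        ∏ t ∈ range (μ.colLen 0), ((μ.rowContent α i : ℂ) - μ.rowContent α t + 1) = 0 := by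
      exact_mod_cast prod_rowContent_sub_add_one_eq_zero h hi
    rw [hzero, mul_zero, zero_mul, zero_mul]

end YoungDiagram

open YoungDiagram in
/-- For `α > 0`, a Young diagram `λ` with `n = |λ|` boxes and arbitrary `u, v ∈ ℂ`:
`∑_{Λ : λ ↗ Λ} (c_α(b) + u)(c_α(b) + v) κ_α(λ,Λ) φ(Λ) = (nα + uv) φ(λ)`,
where `b = Λ ∖ λ` is the added box. -/
theorem jack_content_summation (α : ℝ) (hα : 0 < α) (lam : YoungDiagram)
    (n : ℕ) (hn : n = lam.card) (u v : ℂ) :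
    (∑ᶠ Λ ∈ {Λ : YoungDiagram | YDCovers lam Λ},
      (∑ b ∈ Λ.cells \ lam.cells,
          ((alphaContent α b : ℂ) + u) * ((alphaContent α b : ℂ) + v)) *
        (jackMult α lam Λ : ℂ) * (phiJack α Λ : ℂ))
      = ((n : ℂ) * (α : ℂ) + u * v) * (phiJack α lam : ℂ) := by
  classical
  have hx : Set.InjOn (fun t => (lam.rowContent α t : ℂ)) (range (lam.colLen 0 + 1)) :=
    fun s _ t _ hst => (rowContent_strictAnti hα.le lam).injective (Complex.ofReal_injective hst)
  have hxN : (lam.rowContent α (lam.colLen 0) : ℂ) = -(lam.colLen 0 : ℕ) := by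
    simp [rowContent, alphaContent, rowLen_colLen_zero]
  have hsum : ∑ t ∈ range (lam.colLen 0), ((lam.rowContent α t : ℂ) + t) = n * α := by
    simp only [rowContent, alphaContent, hn, card_eq_sum_rowLen]
    push_cast
    rw [sum_mul]
    exact sum_congr rfl fun t _ => by ring
  rw [finsum_ydCovers_eq_sum_range, sum_congr rfl fun i hi =>
      ite_summand_addBox_eq hα.le u v (Nat.lt_succ_iff.mp (mem_range.mp hi)),
    ← sum_mul, sum_mul_prod_sub_add_one_mul_nodalWeight hx hxN, hsum]
end

section
/- Let α > 0, let Λ be a Young diagram with n = |Λ| boxes, let x_1(α) < y_1(α) < x_2(α) < ⋯ < y_{d-1}(α) < x_d(α) be the interlacing sequences associated with Λ, and let λ be the Young diagram obtained from Λ by removing the removable box whose upper α-content equals y_k(α). Then κ_α(λ,Λ) · dim_α λ / dim_α Λ = [(x_d(α) − y_k(α))(y_k(α) − x_1(α)) / (nα)] · ∏_{i=1}^{k-1} (y_k(α) − x_{i+1}(α))/(y_k(α) − y_i(α)) · ∏_{j=k+1}^{d-1} (y_k(α) − x_j(α))/(y_k(α) − y_j(α)). -/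
/-- `dim_α λ = n! αⁿ ∏_{b∈λ} ((a(b)+1)α + l(b))⁻¹`, where `n = |λ|`. -/
noncomputable def jackDim (α : ℝ) (μ : YoungDiagram) : ℝ :=
  (Nat.factorial μ.card : ℝ) * α ^ μ.card *
    ∏ b ∈ μ.cells, (((armLen μ b : ℝ) + 1) * α + (legLen μ b : ℝ))⁻¹

/-- A box `c ∉ μ` is addable if adjoining it to `μ` gives a Young diagram. -/
def Addable (μ : YoungDiagram) (c : ℕ × ℕ) : Prop :=
  c ∉ μ.cells ∧ ∃ ν : YoungDiagram, ν.cells = insert c μ.cells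

/-- A box `c ∈ μ` is removable if deleting it from `μ` leaves a Young diagram. -/
def Removable (μ : YoungDiagram) (c : ℕ × ℕ) : Prop :=
  c ∈ μ.cells ∧ ∃ ν : YoungDiagram, ν.cells = μ.cells.erase c

/-- The upper `α`-content `αj − i` of a box `b = (i,j)` (0-indexed: `α(j+1) − (i+1)`). -/
noncomputable def upperAlphaContent (α : ℝ) (b : ℕ × ℕ) : ℝ :=
  α * ((b.2 : ℝ) + 1) - ((b.1 : ℝ) + 1)

/-!
Let `(r, c)` be the removed corner and `v = y_k` its upper content. Removing the corner changes
only the hooks in row `r` and column `c`, so `κ_α(λ, Λ) dim_α λ / dim_α Λ = removalWeight / (nα)`,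
a product of content ratios over the cells to the left of the corner and above it; the Pieri
factor turns the column ratios into the same shape as the row ones. These ratios telescope along
the boundary of `Λ`: a factor survives only where the boundary turns, that is at an addable or a
removable cell. Since the interlacing sequences are the contents of the addable cells and the
upper contents of the removable ones, this gives
`removalWeight = -∏ (v - x_m) / ∏_{m ≠ k} (v - y_m)`, which is the right-hand side times `nα`.
-/

open Finset

theorem Finset.image_erase_of_injOn {α β : Type*} [DecidableEq α] [DecidableEq β] {f : α → β}
    {s : Finset α} {a : α} (hf : Set.InjOn f s) (ha : a ∈ s) :
    (s.erase a).image f = (s.image f).erase (f a) := by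
  ext b
  simp only [mem_image, mem_erase]
  constructor
  · rintro ⟨a', ⟨hne, ha'⟩, rfl⟩
    exact ⟨fun h => hne (hf ha' ha h), a', ha', rfl⟩
  · rintro ⟨hne, a', ha', rfl⟩
    exact ⟨a', ⟨fun h => hne (h ▸ rfl), ha'⟩, rfl⟩

theorem Finset.image_eq_image_of_exists {ι κ β : Type*} [DecidableEq β] {s : Finset ι}
    {t : Finset κ} {f : ι → β} {g : κ → β} (h₁ : ∀ i ∈ s, ∃ j ∈ t, g j = f i)
    (h₂ : ∀ j ∈ t, ∃ i ∈ s, f i = g j) : s.image f = t.image g := by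
  ext b
  simp only [mem_image]
  exact ⟨fun ⟨i, hi, he⟩ => he ▸ h₁ i hi, fun ⟨j, hj, he⟩ => he ▸ h₂ j hj⟩

theorem Finset.prod_comp_eq_prod_comp_of_image_eq {ι κ β M : Type*} [DecidableEq β]
    [CommMonoid M] {s : Finset ι} {t : Finset κ} {f : ι → β} {g : κ → β} (hf : Set.InjOn f s)
    (hg : Set.InjOn g t) (h : s.image f = t.image g) (F : β → M) :
    ∏ i ∈ s, F (f i) = ∏ j ∈ t, F (g j) := by
  rw [← prod_image hf, h, prod_image hg]

theorem Finset.prod_erase_comp_eq_prod_erase_comp_of_image_eq {ι κ β M : Type*} [DecidableEq ι]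
    [DecidableEq κ] [DecidableEq β] [CommMonoid M] {s : Finset ι} {t : Finset κ} {f : ι → β}
    {g : κ → β} {a : ι} {b : κ} (hf : Set.InjOn f s) (hg : Set.InjOn g t)
    (h : s.image f = t.image g) (ha : a ∈ s) (hb : b ∈ t) (hab : f a = g b) (F : β → M) :
    ∏ i ∈ s.erase a, F (f i) = ∏ j ∈ t.erase b, F (g j) :=
  prod_comp_eq_prod_comp_of_image_eq (hf.mono (erase_subset a s)) (hg.mono (erase_subset b t))
    (by rw [image_erase_of_injOn hf ha, image_erase_of_injOn hg hb, h, hab]) F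

theorem strictMonoOn_of_interlace {α : Type*} [Preorder α] {x y : ℕ → α} {d : ℕ}
    (h : ∀ m, 1 ≤ m → m ≤ d - 1 → x m < y m ∧ y m < x (m + 1)) :
    StrictMonoOn x (Set.Icc 1 d) ∧ StrictMonoOn y (Set.Icc 1 (d - 1)) := by
  refine ⟨strictMonoOn_of_lt_add_one Set.ordConnected_Icc fun m _ hm hm1 => ?_,
    strictMonoOn_of_lt_add_one Set.ordConnected_Icc fun m _ hm hm1 => ?_⟩
  · have := h m hm.1 (by have := hm1.2; omega)
    exact this.1.trans this.2
  · exact (h m hm.1 hm.2).2.trans (h (m + 1) (by omega) hm1.2).1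

theorem mul_prod_filter_ne_div_prod_filter_ne {K : Type*} [Field K] (f : ℕ → ℕ) (g : ℕ → ℕ → K)
    (N : ℕ) (hg : ∀ j < N, g (f j) (j + 1) ≠ 0) :
    g (f 0) 0 * (∏ j ∈ (range N).filter (fun j => f (j + 1) ≠ f j), g (f (j + 1)) (j + 1)) /
        ∏ j ∈ (range N).filter (fun j => f (j + 1) ≠ f j), g (f j) (j + 1) =
      g (f N) N * ∏ j ∈ range N, g (f j) j / g (f j) (j + 1) := by
  rw [mul_div_assoc, ← prod_div_distrib, prod_filter_of_ne fun j hj hne => ?_]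
  · calc g (f 0) 0 * ∏ j ∈ range N, g (f (j + 1)) (j + 1) / g (f j) (j + 1)
        = (∏ j ∈ range (N + 1), g (f j) j) / ∏ j ∈ range N, g (f j) (j + 1) := by
          rw [prod_range_succ', prod_div_distrib]; ring
      _ = _ := by rw [prod_range_succ, prod_div_distrib]; ring
  · contrapose! hne
    rw [hne, div_self (hg j (mem_range.1 hj))]

theorem mul_prod_Icc_div_eq_neg_prod_div_prod_erase {K : Type*} [Field K] (u M : K)
    (x y : ℕ → K) {d k : ℕ} (hk1 : 1 ≤ k) (hk2 : k ≤ d - 1) :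
    (x d - u) * (u - x 1) / M *
        (∏ i ∈ Icc 1 (k - 1), (u - x (i + 1)) / (u - y i)) *
        ∏ j ∈ Icc (k + 1) (d - 1), (u - x j) / (u - y j) =
      -(∏ m ∈ Icc 1 d, (u - x m)) / (M * ∏ m ∈ (Icc 1 (d - 1)).erase k, (u - y m)) := by
  have hshift : ∏ i ∈ Icc 1 (k - 1), (u - x (i + 1)) = ∏ i ∈ Icc 2 k, (u - x i) := by
    rw [show Icc 2 k = (Icc 1 (k - 1)).map (addRightEmbedding 1) by
      rw [map_add_right_Icc, Nat.sub_add_cancel hk1], prod_map]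
    rfl
  have hx : Icc 1 d = insert 1 (insert d (Icc 2 k ∪ Icc (k + 1) (d - 1))) := by
    ext; simp only [mem_Icc, mem_insert, mem_union]; omega
  have hy : (Icc 1 (d - 1)).erase k = Icc 1 (k - 1) ∪ Icc (k + 1) (d - 1) := by
    ext; simp only [mem_Icc, mem_erase, mem_union]; omega
  rw [hx, hy, prod_insert (by simp only [mem_insert, mem_union, mem_Icc]; omega),
    prod_insert (by simp only [mem_union, mem_Icc]; omega),
    prod_union (disjoint_left.2 fun a ha ha' => by simp only [mem_Icc] at ha ha'; omega),
    prod_union (disjoint_left.2 fun a ha ha' => by simp only [mem_Icc] at ha ha'; omega),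
    prod_div_distrib, prod_div_distrib, hshift]
  ring

namespace YoungDiagram

variable {μ : YoungDiagram}

theorem rowLen_eq_of_mem_iff {i t : ℕ} (h : ∀ j, (i, j) ∈ μ ↔ j < t) : μ.rowLen i = t :=
  eq_of_forall_lt_iff fun j => mem_iff_lt_rowLen.symm.trans (h j)

theorem colLen_eq_of_mem_iff {j t : ℕ} (h : ∀ i, (i, j) ∈ μ ↔ i < t) : μ.colLen j = t := by
  rw [← rowLen_transpose]
  exact rowLen_eq_of_mem_iff fun i => mem_transpose.trans (h i)

theorem lt_rowLen_iff_lt_colLen {i j : ℕ} : j < μ.rowLen i ↔ i < μ.colLen j :=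
  mem_iff_lt_rowLen.symm.trans mem_iff_lt_colLen

theorem prod_row {M : Type*} [CommMonoid M] (μ : YoungDiagram) (i : ℕ) (f : ℕ × ℕ → M) :
    ∏ b ∈ μ.row i, f b = ∏ j ∈ range (μ.rowLen i), f (i, j) := by
  rw [row_eq_prod, prod_product, prod_singleton]

theorem prod_col {M : Type*} [CommMonoid M] (μ : YoungDiagram) (j : ℕ) (f : ℕ × ℕ → M) :
    ∏ b ∈ μ.col j, f b = ∏ i ∈ range (μ.colLen j), f (i, j) := by
  rw [col_eq_prod, prod_product_right, prod_singleton]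

end YoungDiagram

open YoungDiagram

theorem addable_iff {μ : YoungDiagram} {i j : ℕ} :
    Addable μ (i, j) ↔ μ.rowLen i = j ∧ μ.colLen j = i := by
  constructor
  · rintro ⟨hnot, ν, hν⟩
    have hν' : ∀ p, p ∈ ν ↔ p = (i, j) ∨ p ∈ μ := fun p => by
      rw [← mem_cells, hν, mem_insert, mem_cells]
    have hij : (i, j) ∈ ν := (hν' _).2 (Or.inl rfl)
    have hnot' : ¬ j < μ.rowLen i := fun h => hnot (mem_iff_lt_rowLen.2 h)
    have hnot'' : ¬ i < μ.colLen j := fun h => hnot (mem_iff_lt_colLen.2 h)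
    constructor
    · refine rowLen_eq_of_mem_iff fun j' => ⟨fun h => ?_, fun h => ?_⟩
      · exact lt_of_lt_of_le (mem_iff_lt_rowLen.1 h) (not_lt.1 hnot')
      · exact ((hν' _).1 (ν.up_left_mem le_rfl h.le hij)).resolve_left (by simp [h.ne])
    · refine colLen_eq_of_mem_iff fun i' => ⟨fun h => ?_, fun h => ?_⟩
      · exact lt_of_lt_of_le (mem_iff_lt_colLen.1 h) (not_lt.1 hnot'')
      · exact ((hν' _).1 (ν.up_left_mem h.le le_rfl hij)).resolve_left (by simp [h.ne])
  · rintro ⟨hrow, hcol⟩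
    refine ⟨fun h => (mem_iff_lt_rowLen.1 h).ne hrow.symm, ⟨⟨insert (i, j) μ.cells, ?_⟩, rfl⟩⟩
    rintro ⟨a, b⟩ ⟨a', b'⟩ ⟨ha, hb⟩ hmem
    simp only [coe_insert, Set.mem_insert_iff, Prod.mk.injEq, mem_coe, mem_cells] at hmem ⊢
    rcases hmem with ⟨rfl, rfl⟩ | hmem
    · rcases ha.lt_or_eq with ha | rfl
      · exact Or.inr (mem_iff_lt_colLen.2 (hcol ▸ ha |>.trans_le (μ.colLen_anti _ _ hb)))
      · rcases hb.lt_or_eq with hb | rfl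
        · exact Or.inr (mem_iff_lt_rowLen.2 (hrow ▸ hb))
        · exact Or.inl ⟨rfl, rfl⟩
    · exact Or.inr (μ.up_left_mem ha hb hmem)

theorem removable_iff {μ : YoungDiagram} {i j : ℕ} :
    Removable μ (i, j) ↔ μ.rowLen i = j + 1 ∧ μ.colLen j = i + 1 := by
  constructor
  · rintro ⟨hmem, ν, hν⟩
    have hν' : ∀ p, p ∈ ν ↔ p ≠ (i, j) ∧ p ∈ μ := fun p => by
      rw [← mem_cells, hν, mem_erase, mem_cells]
    constructor
    · refine rowLen_eq_of_mem_iff fun j' => ⟨fun h => ?_, fun h => μ.up_left_mem le_rfl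
        (Nat.lt_succ_iff.1 h) hmem⟩
      by_contra hlt
      have hne : (i, j') ≠ (i, j) := by simp only [ne_eq, Prod.mk.injEq]; omega
      exact ((hν' _).1 (ν.up_left_mem le_rfl (by omega) ((hν' _).2 ⟨hne, h⟩))).1 rfl
    · refine colLen_eq_of_mem_iff fun i' => ⟨fun h => ?_, fun h => μ.up_left_mem
        (Nat.lt_succ_iff.1 h) le_rfl hmem⟩
      by_contra hlt
      have hne : (i', j) ≠ (i, j) := by simp only [ne_eq, Prod.mk.injEq]; omega
      exact ((hν' _).1 (ν.up_left_mem (by omega) le_rfl ((hν' _).2 ⟨hne, h⟩))).1 rfl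
  · rintro ⟨hrow, hcol⟩
    refine ⟨mem_iff_lt_rowLen.2 (by omega), ⟨⟨μ.cells.erase (i, j), ?_⟩, rfl⟩⟩
    rintro ⟨a, b⟩ ⟨a', b'⟩ ⟨ha, hb⟩ hmem
    simp only [coe_erase, Set.mem_sdiff, mem_coe, mem_cells, Set.mem_singleton_iff,
      Prod.mk.injEq] at hmem ⊢
    obtain ⟨hmem, hne⟩ := hmem
    refine ⟨μ.up_left_mem ha hb hmem, fun ⟨hai, hbj⟩ => hne ⟨?_, ?_⟩⟩
    · have := mem_iff_lt_colLen.1 hmem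
      have := μ.colLen_anti j b (by omega)
      omega
    · have := mem_iff_lt_rowLen.1 hmem
      have := μ.rowLen_anti i a (by omega)
      omega

namespace YoungDiagram

def addableCells (μ : YoungDiagram) : Finset (ℕ × ℕ) :=
  (range (μ.colLen 0 + 1) ×ˢ range (μ.rowLen 0 + 1)).filter
    fun p => μ.rowLen p.1 = p.2 ∧ μ.colLen p.2 = p.1

def removableCells (μ : YoungDiagram) : Finset (ℕ × ℕ) :=
  (range (μ.colLen 0) ×ˢ range (μ.rowLen 0)).filter
    fun p => μ.rowLen p.1 = p.2 + 1 ∧ μ.colLen p.2 = p.1 + 1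

variable {μ : YoungDiagram}

theorem mem_addableCells {p : ℕ × ℕ} : p ∈ μ.addableCells ↔ Addable μ p := by
  obtain ⟨i, j⟩ := p
  rw [addable_iff, addableCells, mem_filter, mem_product, mem_range, mem_range]
  refine ⟨And.right, fun h => ⟨⟨?_, ?_⟩, h⟩⟩
  · have := μ.colLen_anti 0 j j.zero_le; omega
  · have := μ.rowLen_anti 0 i i.zero_le; omega

theorem mem_removableCells {p : ℕ × ℕ} : p ∈ μ.removableCells ↔ Removable μ p := by
  obtain ⟨i, j⟩ := p
  rw [removable_iff, removableCells, mem_filter, mem_product, mem_range, mem_range]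
  refine ⟨And.right, fun h => ⟨⟨?_, ?_⟩, h⟩⟩
  · have := μ.colLen_anti 0 j j.zero_le; omega
  · have := μ.rowLen_anti 0 i i.zero_le; omega

variable {M : Type*} [CommMonoid M]

theorem prod_addableCells_filter_snd_le (μ : YoungDiagram) (N : ℕ) (F : ℕ × ℕ → M) :
    ∏ p ∈ μ.addableCells.filter (·.2 ≤ N), F p =
      F (μ.colLen 0, 0) * ∏ j ∈ (range N).filter (fun j => μ.colLen (j + 1) ≠ μ.colLen j),
        F (μ.colLen (j + 1), j + 1) := by
  have hcells : μ.addableCells.filter (·.2 ≤ N) = insert (μ.colLen 0, 0)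
      (((range N).filter fun j => μ.colLen (j + 1) ≠ μ.colLen j).image
        fun j => (μ.colLen (j + 1), j + 1)) := by
    ext ⟨i, j⟩
    simp only [mem_filter, mem_addableCells, addable_iff, mem_insert, mem_image, mem_range,
      Prod.mk.injEq]
    constructor
    · rintro ⟨⟨hrow, rfl⟩, hj⟩
      rcases j with _ | j
      · exact Or.inl ⟨rfl, rfl⟩
      · have := μ.lt_rowLen_iff_lt_colLen (i := μ.colLen (j + 1)) (j := j)
        exact Or.inr ⟨j, ⟨by omega, by omega⟩, rfl, rfl⟩
    · rintro (⟨rfl, rfl⟩ | ⟨j, ⟨hj, hne⟩, rfl, rfl⟩)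
      · have := μ.lt_rowLen_iff_lt_colLen (i := μ.colLen 0) (j := 0)
        exact ⟨⟨by omega, rfl⟩, N.zero_le⟩
      · have := μ.lt_rowLen_iff_lt_colLen (i := μ.colLen (j + 1)) (j := j)
        have := μ.lt_rowLen_iff_lt_colLen (i := μ.colLen (j + 1)) (j := j + 1)
        have := μ.colLen_anti j (j + 1) j.le_succ
        exact ⟨⟨by omega, rfl⟩, hj⟩
  rw [hcells, prod_insert (by simp), prod_image fun _ _ _ _ h => (by simpa using h : _ ∧ _).2]

theorem prod_removableCells_filter_snd_lt (μ : YoungDiagram) (N : ℕ) (F : ℕ × ℕ → M) :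
    ∏ p ∈ μ.removableCells.filter (·.2 < N), F (p.1 + 1, p.2 + 1) =
      ∏ j ∈ (range N).filter (fun j => μ.colLen (j + 1) ≠ μ.colLen j),
        F (μ.colLen j, j + 1) := by
  refine prod_nbij' (·.2) (fun j => (μ.colLen j - 1, j)) ?_ ?_ ?_ ?_ ?_
  all_goals simp only [mem_filter, mem_removableCells, mem_range, Prod.forall,
    removable_iff]
  · rintro i j ⟨⟨hrow, hcol⟩, hj⟩
    have := μ.lt_rowLen_iff_lt_colLen (i := i) (j := j + 1)
    exact ⟨hj, by omega⟩
  · rintro j ⟨hj, hne⟩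
    have := μ.lt_rowLen_iff_lt_colLen (i := μ.colLen j - 1) (j := j)
    have := μ.lt_rowLen_iff_lt_colLen (i := μ.colLen j - 1) (j := j + 1)
    have := μ.colLen_anti j (j + 1) j.le_succ
    exact ⟨⟨by omega, by omega⟩, hj⟩
  · rintro i j ⟨⟨-, hcol⟩, -⟩
    simp only [hcol, Nat.add_sub_cancel]
  · exact fun _ _ => trivial
  · rintro i j ⟨⟨-, hcol⟩, -⟩
    rw [hcol]

theorem addableCells_transpose :
    μ.transpose.addableCells = μ.addableCells.map (Equiv.prodComm ℕ ℕ).toEmbedding := by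
  ext ⟨j, i⟩
  rw [mem_map_equiv, Equiv.prodComm_symm, Equiv.prodComm_apply, Prod.swap_prod_mk,
    mem_addableCells, mem_addableCells, addable_iff, addable_iff, rowLen_transpose,
    colLen_transpose, and_comm]

theorem removableCells_transpose :
    μ.transpose.removableCells = μ.removableCells.map (Equiv.prodComm ℕ ℕ).toEmbedding := by
  ext ⟨j, i⟩
  rw [mem_map_equiv, Equiv.prodComm_symm, Equiv.prodComm_apply, Prod.swap_prod_mk,
    mem_removableCells, mem_removableCells, removable_iff, removable_iff, rowLen_transpose,
    colLen_transpose, and_comm]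

theorem prod_addableCells_filter_fst_le (μ : YoungDiagram) (N : ℕ) (F : ℕ × ℕ → M) :
    ∏ p ∈ μ.addableCells.filter (·.1 ≤ N), F p =
      F (0, μ.rowLen 0) * ∏ i ∈ (range N).filter (fun i => μ.rowLen (i + 1) ≠ μ.rowLen i),
        F (i + 1, μ.rowLen (i + 1)) := by
  calc ∏ p ∈ μ.addableCells.filter (·.1 ≤ N), F p
      = ∏ q ∈ μ.transpose.addableCells.filter (·.2 ≤ N), F q.swap := by
        rw [addableCells_transpose, filter_map, prod_map]; rfl
    _ = _ := by simp only [prod_addableCells_filter_snd_le, colLen_transpose, Prod.swap_prod_mk]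

theorem prod_removableCells_filter_fst_lt (μ : YoungDiagram) (N : ℕ) (F : ℕ × ℕ → M) :
    ∏ p ∈ μ.removableCells.filter (·.1 < N), F (p.1 + 1, p.2 + 1) =
      ∏ i ∈ (range N).filter (fun i => μ.rowLen (i + 1) ≠ μ.rowLen i),
        F (i + 1, μ.rowLen i) := by
  calc ∏ p ∈ μ.removableCells.filter (·.1 < N), F (p.1 + 1, p.2 + 1)
      = ∏ q ∈ μ.transpose.removableCells.filter (·.2 < N), F (q.1 + 1, q.2 + 1).swap := by
        rw [removableCells_transpose, filter_map, prod_map]; rfl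
    _ = _ := by
        rw [prod_removableCells_filter_snd_lt μ.transpose N (fun q => F q.swap)]
        simp only [colLen_transpose, Prod.swap_prod_mk]

end YoungDiagram

theorem injOn_alphaContent_of_antitone {α : ℝ} (hα : 0 < α) {φ : ℕ → ℕ} (hφ : Antitone φ) :
    Set.InjOn (alphaContent α) {p | p.1 = φ p.2} := by
  have hmono : StrictMono fun j => alphaContent α (φ j, j) := fun j j' hjj' => by
    have h1 : (φ j' : ℝ) ≤ φ j := mod_cast hφ hjj'.le
    have h2 : (j : ℝ) < j' := mod_cast hjj'
    simp only [alphaContent]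
    nlinarith
  rintro ⟨i, j⟩ (rfl : i = φ j) ⟨i', j'⟩ (rfl : i' = φ j') h
  rw [hmono.injective h]

theorem injOn_alphaContent_addableCells {α : ℝ} (hα : 0 < α) (μ : YoungDiagram) :
    Set.InjOn (alphaContent α) μ.addableCells :=
  (injOn_alphaContent_of_antitone hα fun _ _ h => μ.colLen_anti _ _ h).mono fun _ hp =>
    (addable_iff.1 (mem_addableCells.1 hp)).2.symm

theorem injOn_upperAlphaContent_removableCells {α : ℝ} (hα : 0 < α) (μ : YoungDiagram) :
    Set.InjOn (upperAlphaContent α) μ.removableCells := by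
  have hsub : (μ.removableCells : Set (ℕ × ℕ)) ⊆ {p | p.1 = μ.colLen p.2 - 1} := fun p hp => by
    have := (removable_iff.1 (mem_removableCells.1 hp)).2
    show p.1 = μ.colLen p.2 - 1
    omega
  have hinj := (injOn_alphaContent_of_antitone hα (φ := fun j => μ.colLen j - 1)
    fun _ _ h => Nat.sub_le_sub_right (μ.colLen_anti _ _ h) 1).mono hsub
  refine fun p hp q hq h => hinj hp hq ?_
  simp only [upperAlphaContent, alphaContent] at h ⊢
  linarith


theorem upperAlphaContent_eq_alphaContent (α : ℝ) (p : ℕ × ℕ) :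
    upperAlphaContent α p = alphaContent α (p.1 + 1, p.2 + 1) := by
  simp only [upperAlphaContent, alphaContent, Nat.cast_add, Nat.cast_one]

/-- `nα · κ_α(λ, Λ) dim_α λ / dim_α Λ` when `λ` is `Λ` with its corner `(r, c)` removed. -/
noncomputable def removalWeight (α : ℝ) (Λ : YoungDiagram) (r c : ℕ) : ℝ :=
  α * (∏ j ∈ range c, (upperAlphaContent α (r, c) - alphaContent α (Λ.colLen j, j)) /
      (upperAlphaContent α (r, c) - alphaContent α (Λ.colLen j, j + 1))) *
    ∏ i ∈ range r, (upperAlphaContent α (r, c) - alphaContent α (i, Λ.rowLen i)) /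
      (upperAlphaContent α (r, c) - alphaContent α (i + 1, Λ.rowLen i))

section Removable

variable {α : ℝ} {Λ : YoungDiagram} {r c : ℕ}

theorem filter_addableCells_not_snd_le (hb : Removable Λ (r, c)) :
    Λ.addableCells.filter (fun p => ¬ p.2 ≤ c) = Λ.addableCells.filter (·.1 ≤ r) := by
  obtain ⟨hrow, hcol⟩ := removable_iff.1 hb
  refine filter_congr fun ⟨i, j⟩ hp => ?_
  obtain ⟨hi, hj⟩ := addable_iff.1 (mem_addableCells.1 hp)
  have := Λ.lt_rowLen_iff_lt_colLen (i := r) (j := c + 1)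
  have := fun h => Λ.colLen_anti (c + 1) j h
  have := fun h => Λ.rowLen_anti i r h
  show ¬ j ≤ c ↔ i ≤ r
  omega

theorem filter_erase_removableCells_not_snd_lt (hb : Removable Λ (r, c)) :
    (Λ.removableCells.erase (r, c)).filter (fun p => ¬ p.2 < c) =
      Λ.removableCells.filter (·.1 < r) := by
  obtain ⟨hrow, hcol⟩ := removable_iff.1 hb
  rw [← erase_eq_of_notMem (s := Λ.removableCells.filter _) (a := (r, c)) (by simp),
    ← filter_erase]
  refine filter_congr fun ⟨i, j⟩ hp => ?_
  obtain ⟨hne, hp⟩ := mem_erase.1 hp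
  obtain ⟨hi, hj⟩ := removable_iff.1 (mem_removableCells.1 hp)
  have := Λ.lt_rowLen_iff_lt_colLen (i := r) (j := c + 1)
  have := fun h => Λ.colLen_anti (c + 1) j h
  have := fun h => Λ.rowLen_anti i r h
  simp only [ne_eq, Prod.mk.injEq] at hne
  show ¬ j < c ↔ i < r
  rcases eq_or_ne j c with rfl | _ <;> omega

theorem prod_addableCells_div_prod_removableCells (hα : 0 < α) (hb : Removable Λ (r, c)) :
    (∏ p ∈ Λ.addableCells, (upperAlphaContent α (r, c) - alphaContent α p)) /
        ∏ p ∈ Λ.removableCells.erase (r, c),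
          (upperAlphaContent α (r, c) - upperAlphaContent α p) =
      -removalWeight α Λ r c := by
  obtain ⟨hrow, hcol⟩ := removable_iff.1 hb
  set v := upperAlphaContent α (r, c)
  have hv' : v = α * ((c : ℝ) + 1) - ((r : ℝ) + 1) := rfl
  set g : ℕ → ℕ → ℝ := fun a b => v - alphaContent α (a, b)
  have hadd : ∏ p ∈ Λ.addableCells, (v - alphaContent α p) =
      (∏ p ∈ Λ.addableCells.filter (·.2 ≤ c), g p.1 p.2) *
        ∏ p ∈ Λ.addableCells.filter (·.1 ≤ r), g p.1 p.2 := by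
    rw [← prod_filter_mul_prod_filter_not _ (·.2 ≤ c), filter_addableCells_not_snd_le hb]
  have hrem : ∏ p ∈ Λ.removableCells.erase (r, c), (v - upperAlphaContent α p) =
      (∏ p ∈ Λ.removableCells.filter (·.2 < c), g (p.1 + 1) (p.2 + 1)) *
        ∏ p ∈ Λ.removableCells.filter (·.1 < r), g (p.1 + 1) (p.2 + 1) := by
    rw [← prod_filter_mul_prod_filter_not _ (·.2 < c), filter_erase_removableCells_not_snd_lt hb,
      filter_erase, erase_eq_of_notMem (by simp)]
    simp only [g, upperAlphaContent_eq_alphaContent]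
  have hcols : (∏ p ∈ Λ.addableCells.filter (·.2 ≤ c), g p.1 p.2) /
      ∏ p ∈ Λ.removableCells.filter (·.2 < c), g (p.1 + 1) (p.2 + 1) =
      α * ∏ j ∈ range c, g (Λ.colLen j) j / g (Λ.colLen j) (j + 1) := by
    rw [prod_addableCells_filter_snd_le _ _ fun p => g p.1 p.2,
      prod_removableCells_filter_snd_lt _ _ fun p => g p.1 p.2,
      mul_prod_filter_ne_div_prod_filter_ne Λ.colLen g c fun j hj => ?_]
    · simp only [g, hcol, hv', alphaContent]; push_cast; ring
    · have hlen : (r : ℝ) + 1 ≤ Λ.colLen j := mod_cast hcol ▸ Λ.colLen_anti j c hj.le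
      have hjc : (j : ℝ) + 1 ≤ c := mod_cast hj
      simp only [g, hv', alphaContent]
      push_cast
      nlinarith
  have hrows : (∏ p ∈ Λ.addableCells.filter (·.1 ≤ r), g p.1 p.2) /
      ∏ p ∈ Λ.removableCells.filter (·.1 < r), g (p.1 + 1) (p.2 + 1) =
      -∏ i ∈ range r, g i (Λ.rowLen i) / g (i + 1) (Λ.rowLen i) := by
    rw [prod_addableCells_filter_fst_le _ _ fun p => g p.1 p.2,
      prod_removableCells_filter_fst_lt _ _ fun p => g p.1 p.2,
      mul_prod_filter_ne_div_prod_filter_ne Λ.rowLen (fun a b => g b a) r fun i hi => ?_]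
    · simp only [g, hrow, hv', alphaContent]; push_cast; ring
    · have hlen : (c : ℝ) + 1 ≤ Λ.rowLen i := mod_cast hrow ▸ Λ.rowLen_anti i r hi.le
      have hir : (i : ℝ) + 1 ≤ r := mod_cast hi
      simp only [g, hv', alphaContent]
      push_cast
      nlinarith
  rw [hadd, hrem, mul_div_mul_comm, hcols, hrows, removalWeight]
  ring

end Removable

noncomputable def upperHookLength (α : ℝ) (μ : YoungDiagram) (b : ℕ × ℕ) : ℝ :=
  ((armLen μ b : ℝ) + 1) * α + (legLen μ b : ℝ)

noncomputable def pieriFactor (α A L : ℝ) : ℝ :=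
  (A * α + L + 2) * ((A + 1) * α + L) / (((A + 1) * α + L + 1) * (A * α + L + 1))

section Hooks

variable {α : ℝ} {μ : YoungDiagram}

theorem cast_armLen {i j : ℕ} (h : (i, j) ∈ μ) : (armLen μ (i, j) : ℝ) = μ.rowLen i - j - 1 := by
  have := mem_iff_lt_rowLen.1 h
  rw [armLen, Nat.sub_sub, Nat.cast_sub this]
  push_cast; ring

theorem cast_legLen {i j : ℕ} (h : (i, j) ∈ μ) : (legLen μ (i, j) : ℝ) = μ.colLen j - i - 1 := by
  have := mem_iff_lt_colLen.1 h
  rw [legLen, Nat.sub_sub, Nat.cast_sub this]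
  push_cast; ring

theorem upperHookLength_eq {i j : ℕ} (h : (i, j) ∈ μ) :
    upperHookLength α μ (i, j) =
      alphaContent α (i + 1, μ.rowLen i) - alphaContent α (μ.colLen j, j) := by
  rw [upperHookLength, cast_armLen h, cast_legLen h, alphaContent, alphaContent]
  push_cast; ring

theorem upperHookLength_pos (hα : 0 < α) (μ : YoungDiagram) (b : ℕ × ℕ) :
    0 < upperHookLength α μ b := by
  unfold upperHookLength
  positivity

theorem jackDim_div_jackDim (hα : 0 < α) {lam Λ : YoungDiagram} (hcard : Λ.card = lam.card + 1) :
    jackDim α lam / jackDim α Λ =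
      (∏ b ∈ Λ.cells, upperHookLength α Λ b) /
        (Λ.card * α * ∏ b ∈ lam.cells, upperHookLength α lam b) := by
  have hΛ : ∏ b ∈ Λ.cells, upperHookLength α Λ b ≠ 0 :=
    (prod_pos fun b _ => upperHookLength_pos hα Λ b).ne'
  have hlam : ∏ b ∈ lam.cells, upperHookLength α lam b ≠ 0 :=
    (prod_pos fun b _ => upperHookLength_pos hα lam b).ne'
  have hdim (μ : YoungDiagram) : jackDim α μ =
      μ.card.factorial * α ^ μ.card * (∏ b ∈ μ.cells, upperHookLength α μ b)⁻¹ := by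
    rw [jackDim, prod_inv_distrib]; rfl
  rw [hdim, hdim, hcard, Nat.factorial_succ]
  push_cast
  field_simp
  ring

theorem pieriFactor_mul_div (hα : 0 < α) {A L : ℝ} (hA : 0 ≤ A) (hL : 0 ≤ L) :
    pieriFactor α A L * (((A + 1) * α + L + 1) / ((A + 1) * α + L)) =
      (A * α + L + 2) / (A * α + L + 1) := by
  have : 0 < (A + 1) * α + L := by positivity
  have : 0 < A * α + L + 1 := by positivity
  unfold pieriFactor
  field_simp

end Hooks

namespace YoungDiagram

section Erase

variable {α : ℝ} {Λ lam : YoungDiagram} {r c : ℕ}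

theorem mem_of_cells_eq_erase (hlam : lam.cells = Λ.cells.erase (r, c)) {p : ℕ × ℕ} :
    p ∈ lam ↔ p ≠ (r, c) ∧ p ∈ Λ := by
  rw [← mem_cells, hlam, mem_erase, mem_cells]

theorem rowLen_of_cells_eq_erase (hb : Removable Λ (r, c))
    (hlam : lam.cells = Λ.cells.erase (r, c)) (i : ℕ) :
    lam.rowLen i = if i = r then c else Λ.rowLen i := by
  obtain ⟨hrow, -⟩ := removable_iff.1 hb
  refine rowLen_eq_of_mem_iff fun j => ?_
  rw [mem_of_cells_eq_erase hlam, mem_iff_lt_rowLen, ne_eq, Prod.mk.injEq]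
  split_ifs with h
  · subst h; omega
  · omega

theorem colLen_of_cells_eq_erase (hb : Removable Λ (r, c))
    (hlam : lam.cells = Λ.cells.erase (r, c)) (j : ℕ) :
    lam.colLen j = if j = c then r else Λ.colLen j := by
  obtain ⟨-, hcol⟩ := removable_iff.1 hb
  refine colLen_eq_of_mem_iff fun i => ?_
  rw [mem_of_cells_eq_erase hlam, mem_iff_lt_colLen, ne_eq, Prod.mk.injEq]
  split_ifs with h
  · subst h; omega
  · omega

theorem card_eq_card_of_cells_eq_erase_add_one (hb : Removable Λ (r, c))
    (hlam : lam.cells = Λ.cells.erase (r, c)) :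
    Λ.card = lam.card + 1 := by
  rw [YoungDiagram.card, YoungDiagram.card, hlam, card_erase_add_one hb.1]

theorem prod_upperHookLength_div_of_cells_eq_erase (hb : Removable Λ (r, c))
    (hlam : lam.cells = Λ.cells.erase (r, c)) (hα : 0 < α) :
    ∏ b ∈ lam.cells, upperHookLength α Λ b / upperHookLength α lam b =
      (∏ j ∈ range c, upperHookLength α Λ (r, j) / upperHookLength α lam (r, j)) *
        ∏ i ∈ range r, upperHookLength α Λ (i, c) / upperHookLength α lam (i, c) := by
  have hrow := rowLen_of_cells_eq_erase hb hlam
  have hcol := colLen_of_cells_eq_erase hb hlam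
  have hunchanged : ∀ b ∈ lam.cells, b ∉ lam.row r ∪ lam.col c →
      upperHookLength α Λ b / upperHookLength α lam b = 1 := by
    intro b hb' hbS
    rw [mem_cells] at hb'
    simp only [mem_union, mem_row_iff, mem_col_iff, hb', true_and, not_or] at hbS
    have harm : armLen lam b = armLen Λ b := by simp only [armLen, hrow, if_neg hbS.1]
    have hleg : legLen lam b = legLen Λ b := by simp only [legLen, hcol, if_neg hbS.2]
    unfold upperHookLength
    rw [harm, hleg]
    exact div_self (upperHookLength_pos hα Λ b).ne'
  have hdisj : Disjoint (lam.row r) (lam.col c) := by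
    refine disjoint_left.2 fun b hbr hbc => ?_
    obtain ⟨hmem, h1⟩ := mem_row_iff.1 hbr
    obtain ⟨-, h2⟩ := mem_col_iff.1 hbc
    exact ((mem_of_cells_eq_erase hlam).1 hmem).1 (Prod.ext h1 h2)
  rw [← prod_subset (s₁ := lam.row r ∪ lam.col c)
      (union_subset (filter_subset _ _) (filter_subset _ _)) hunchanged, prod_union hdisj,
    prod_row, prod_col, hrow, hcol, if_pos rfl, if_pos rfl]

theorem jackMult_of_cells_eq_erase (hb : Removable Λ (r, c))
    (hlam : lam.cells = Λ.cells.erase (r, c)) :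
    jackMult α lam Λ = ∏ i ∈ range r, pieriFactor α (armLen lam (i, c)) (legLen lam (i, c)) := by
  have hdiff : Λ.cells \ lam.cells = {(r, c)} := by rw [hlam, sdiff_erase_self hb.1]
  change ∏ b0 ∈ Λ.cells \ lam.cells, ∏ b ∈ lam.col b0.2,
    pieriFactor α (armLen lam b) (legLen lam b) = _
  rw [hdiff, prod_singleton, prod_col, colLen_of_cells_eq_erase hb hlam, if_pos rfl]

theorem upperHookLength_div_of_cells_eq_erase_row (hb : Removable Λ (r, c))
    (hlam : lam.cells = Λ.cells.erase (r, c)) {j : ℕ} (hj : j < c) :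
    upperHookLength α Λ (r, j) / upperHookLength α lam (r, j) =
      (upperAlphaContent α (r, c) - alphaContent α (Λ.colLen j, j)) /
        (upperAlphaContent α (r, c) - alphaContent α (Λ.colLen j, j + 1)) := by
  have hrow := rowLen_of_cells_eq_erase hb hlam
  have hmem : (r, j) ∈ lam := mem_iff_lt_rowLen.2 (by rw [hrow, if_pos rfl]; exact hj)
  have hmemΛ : (r, j) ∈ Λ := ((mem_of_cells_eq_erase hlam).1 hmem).2
  rw [upperHookLength_eq hmem, upperHookLength_eq hmemΛ, hrow, if_pos rfl,
    colLen_of_cells_eq_erase hb hlam, if_neg hj.ne, (removable_iff.1 hb).1]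
  simp only [upperAlphaContent, alphaContent]
  push_cast
  ring

theorem pieriFactor_mul_upperHookLength_div_of_cells_eq_erase_col (hb : Removable Λ (r, c))
    (hlam : lam.cells = Λ.cells.erase (r, c)) (hα : 0 < α) {i : ℕ} (hi : i < r) :
    pieriFactor α (armLen lam (i, c)) (legLen lam (i, c)) *
        (upperHookLength α Λ (i, c) / upperHookLength α lam (i, c)) =
      (upperAlphaContent α (r, c) - alphaContent α (i, Λ.rowLen i)) /
        (upperAlphaContent α (r, c) - alphaContent α (i + 1, Λ.rowLen i)) := by
  have hcol := colLen_of_cells_eq_erase hb hlam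
  have hmem : (i, c) ∈ lam := mem_iff_lt_colLen.2 (by rw [hcol, if_pos rfl]; exact hi)
  have hmemΛ : (i, c) ∈ Λ := ((mem_of_cells_eq_erase hlam).1 hmem).2
  have harm : (armLen lam (i, c) : ℝ) = Λ.rowLen i - c - 1 := by
    rw [cast_armLen hmem, rowLen_of_cells_eq_erase hb hlam, if_neg hi.ne]
  have hleg : (legLen lam (i, c) : ℝ) = r - i - 1 := by
    rw [cast_legLen hmem, hcol, if_pos rfl]
  have hhook : upperHookLength α Λ (i, c) =
      ((armLen lam (i, c) : ℝ) + 1) * α + legLen lam (i, c) + 1 := by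
    rw [upperHookLength_eq hmemΛ, (removable_iff.1 hb).2, harm, hleg, alphaContent, alphaContent]
    push_cast; ring
  rw [hhook, upperHookLength, pieriFactor_mul_div hα (Nat.cast_nonneg _) (Nat.cast_nonneg _),
    ← neg_div_neg_eq, harm, hleg]
  simp only [upperAlphaContent, alphaContent]
  push_cast
  ring

theorem jackMult_mul_jackDim_div_jackDim (hb : Removable Λ (r, c))
    (hlam : lam.cells = Λ.cells.erase (r, c)) (hα : 0 < α) :
    jackMult α lam Λ * jackDim α lam / jackDim α Λ = removalWeight α Λ r c / (Λ.card * α) := by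
  obtain ⟨hrow, hcol⟩ := removable_iff.1 hb
  have hcorner : upperHookLength α Λ (r, c) = α := by
    rw [upperHookLength_eq hb.1, hrow, hcol, alphaContent, alphaContent]
    push_cast; ring
  have hrows := prod_congr rfl fun j hj =>
    upperHookLength_div_of_cells_eq_erase_row (α := α) hb hlam (mem_range.1 hj)
  have hcols := prod_congr rfl fun i hi =>
    pieriFactor_mul_upperHookLength_div_of_cells_eq_erase_col hb hlam hα (mem_range.1 hi)
  rw [prod_mul_distrib] at hcols
  have hratio := prod_upperHookLength_div_of_cells_eq_erase hb hlam hα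
  rw [prod_div_distrib] at hratio
  calc jackMult α lam Λ * jackDim α lam / jackDim α Λ
      = α * jackMult α lam Λ * ((∏ b ∈ lam.cells, upperHookLength α Λ b) /
          ∏ b ∈ lam.cells, upperHookLength α lam b) / (Λ.card * α) := by
        rw [mul_div_assoc, jackDim_div_jackDim hα (card_eq_card_of_cells_eq_erase_add_one hb hlam),
          ← mul_prod_erase _ _ hb.1, ← hlam, hcorner]
        ring
    _ = removalWeight α Λ r c / (Λ.card * α) := by
        rw [hratio, removalWeight, ← hrows, ← hcols, jackMult_of_cells_eq_erase hb hlam]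
        ring

end Erase

end YoungDiagram

theorem jack_cotransition_eq_analytic_general (α : ℝ) (hα : 0 < α)
    (Λ lam : YoungDiagram) (n : ℕ) (hn : n = Λ.card)
    (d k : ℕ) (hk1 : 1 ≤ k) (hk2 : k ≤ d - 1)
    (x y : ℕ → ℝ)
    -- the sequences interlace: x₁ < y₁ < x₂ < ⋯ < y_{d-1} < x_d
    (hinter : ∀ m, 1 ≤ m → m ≤ d - 1 → x m < y m ∧ y m < x (m + 1))
    -- x₁(α),…,x_d(α) are exactly the α-contents of the addable boxes of Λ
    (hx1 : ∀ m, 1 ≤ m → m ≤ d → ∃ c, Addable Λ c ∧ alphaContent α c = x m)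
    (hx2 : ∀ c, Addable Λ c → ∃ m, 1 ≤ m ∧ m ≤ d ∧ alphaContent α c = x m)
    -- y₁(α),…,y_{d-1}(α) are exactly the upper α-contents of the removable boxes of Λ
    (hy1 : ∀ m, 1 ≤ m → m ≤ d - 1 → ∃ c, Removable Λ c ∧ upperAlphaContent α c = y m)
    (hy2 : ∀ c, Removable Λ c → ∃ m, 1 ≤ m ∧ m ≤ d - 1 ∧ upperAlphaContent α c = y m)
    -- λ is obtained from Λ by removing the removable box of upper α-content y k
    (b0 : ℕ × ℕ) (hb0 : Removable Λ b0) (hb0y : upperAlphaContent α b0 = y k)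
    (hlam : lam.cells = Λ.cells.erase b0) :
    jackMult α lam Λ * jackDim α lam / jackDim α Λ =
      (x d - y k) * (y k - x 1) / ((n : ℝ) * α) *
        (∏ i ∈ Finset.Icc 1 (k - 1), (y k - x (i + 1)) / (y k - y i)) *
        ∏ j ∈ Finset.Icc (k + 1) (d - 1), (y k - x j) / (y k - y j) := by
  obtain ⟨r, c⟩ := b0
  obtain ⟨hxmono, hymono⟩ := strictMonoOn_of_interlace hinter
  have hximage : (Icc 1 d).image x = Λ.addableCells.image (alphaContent α) :=
    image_eq_image_of_exists
      (fun m hm => (hx1 m (mem_Icc.1 hm).1 (mem_Icc.1 hm).2).imp fun _ h =>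
        ⟨mem_addableCells.2 h.1, h.2⟩)
      fun p hp => (hx2 p (mem_addableCells.1 hp)).imp fun _ h =>
        ⟨mem_Icc.2 ⟨h.1, h.2.1⟩, h.2.2.symm⟩
  have hyimage : (Icc 1 (d - 1)).image y = Λ.removableCells.image (upperAlphaContent α) :=
    image_eq_image_of_exists
      (fun m hm => (hy1 m (mem_Icc.1 hm).1 (mem_Icc.1 hm).2).imp fun _ h =>
        ⟨mem_removableCells.2 h.1, h.2⟩)
      fun p hp => (hy2 p (mem_removableCells.1 hp)).imp fun _ h =>
        ⟨mem_Icc.2 ⟨h.1, h.2.1⟩, h.2.2.symm⟩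
  have hnum := prod_comp_eq_prod_comp_of_image_eq (by rw [coe_Icc]; exact hxmono.injOn)
    (injOn_alphaContent_addableCells hα Λ) hximage (y k - ·)
  have hden := prod_erase_comp_eq_prod_erase_comp_of_image_eq
    (by rw [coe_Icc]; exact hymono.injOn) (injOn_upperAlphaContent_removableCells hα Λ) hyimage
    (mem_Icc.2 ⟨hk1, hk2⟩) (mem_removableCells.2 hb0) hb0y.symm (y k - ·)
  rw [YoungDiagram.jackMult_mul_jackDim_div_jackDim hb0 hlam hα, ← neg_neg (removalWeight α Λ r c),
    ← prod_addableCells_div_prod_removableCells hα hb0,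
    mul_prod_Icc_div_eq_neg_prod_div_prod_erase _ _ _ _ hk1 hk2, hnum, hden, hb0y, hn]
  ring

/-- The α-co-transition probability `κ_α(λ,Λ) dim_α λ / dim_α Λ`, for `λ` obtained from `Λ`
by removing the removable box of upper α-content `y_k(α)`, equals the analytic co-transition
weight of the interlacing sequences `x₁(α) < y₁(α) < ⋯ < y_{d−1}(α) < x_d(α)` of `Λ`. -/
theorem jack_cotransition_eq_analytic (α : ℝ) (hα : 0 < α)
    (Λ lam : YoungDiagram) (n : ℕ) (hn : n = Λ.card)
    (d k : ℕ) (hd : 1 ≤ d) (hk1 : 1 ≤ k) (hk2 : k ≤ d - 1)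
    (x y : ℕ → ℝ)
    -- the sequences interlace: x₁ < y₁ < x₂ < ⋯ < y_{d-1} < x_d
    (hinter : ∀ m, 1 ≤ m → m ≤ d - 1 → x m < y m ∧ y m < x (m + 1))
    -- x₁(α),…,x_d(α) are exactly the α-contents of the addable boxes of Λ
    (hx1 : ∀ m, 1 ≤ m → m ≤ d → ∃ c, Addable Λ c ∧ alphaContent α c = x m)
    (hx2 : ∀ c, Addable Λ c → ∃ m, 1 ≤ m ∧ m ≤ d ∧ alphaContent α c = x m)
    -- y₁(α),…,y_{d-1}(α) are exactly the upper α-contents of the removable boxes of Λ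
    (hy1 : ∀ m, 1 ≤ m → m ≤ d - 1 → ∃ c, Removable Λ c ∧ upperAlphaContent α c = y m)
    (hy2 : ∀ c, Removable Λ c → ∃ m, 1 ≤ m ∧ m ≤ d - 1 ∧ upperAlphaContent α c = y m)
    -- λ is obtained from Λ by removing the removable box of upper α-content y k
    (b0 : ℕ × ℕ) (hb0 : Removable Λ b0) (hb0y : upperAlphaContent α b0 = y k)
    (hlam : lam.cells = Λ.cells.erase b0) :
    jackMult α lam Λ * jackDim α lam / jackDim α Λ =
      (x d - y k) * (y k - x 1) / ((n : ℝ) * α) *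
        (∏ i ∈ Finset.Icc 1 (k - 1), (y k - x (i + 1)) / (y k - y i)) *
        ∏ j ∈ Finset.Icc (k + 1) (d - 1), (y k - x j) / (y k - y j) :=
  jack_cotransition_eq_analytic_general α hα Λ lam n hn d k hk1 hk2 x y hinter hx1 hx2 hy1 hy2 b0
    hb0 hb0y hlam
end

section
/- Let α > 0, let λ be a Young diagram with associated interlacing sequences x_1(α) < y_1(α) < ⋯ < y_{d-1}(α) < x_d(α), and let Λ be the Young diagram obtained from λ by adding the addable box of α-content x_k(α). Then κ_α(λ,Λ) · φ(Λ) / φ(λ) = ∏_{i=1}^{k-1} (x_k(α) − y_i(α))/(x_k(α) − x_i(α)) · ∏_{j=k+1}^{d} (x_k(α) − y_{j-1}(α))/(x_k(α) − x_j(α)). -/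
section JTAAux
open Finset YoungDiagram

lemma jta_rowLen_eq {μ : YoungDiagram} {i n : ℕ} (h1 : (i, n) ∉ μ)
    (h2 : ∀ m, m < n → (i, m) ∈ μ) : μ.rowLen i = n := by
  have ha : μ.rowLen i ≤ n := by
    by_contra h
    exact h1 (mem_iff_lt_rowLen.2 (by omega))
  have hb : n ≤ μ.rowLen i := by
    rcases n with _ | m
    · omega
    · have := mem_iff_lt_rowLen.1 (h2 m (by omega))
      omega
  omega

lemma jta_colLen_eq {μ : YoungDiagram} {j n : ℕ} (h1 : (n, j) ∉ μ)
    (h2 : ∀ m, m < n → (m, j) ∈ μ) : μ.colLen j = n := by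
  have ha : μ.colLen j ≤ n := by
    by_contra h
    exact h1 (mem_iff_lt_colLen.2 (by omega))
  have hb : n ≤ μ.colLen j := by
    rcases n with _ | m
    · omega
    · have := mem_iff_lt_colLen.1 (h2 m (by omega))
      omega
  omega

lemma jta_addable_iff {μ : YoungDiagram} {p : ℕ × ℕ} :
    Addable μ p ↔ μ.rowLen p.1 = p.2 ∧ μ.colLen p.2 = p.1 := by
  obtain ⟨i, j⟩ := p
  constructor
  · rintro ⟨hnot, ν, hν⟩
    have hnot' : (i, j) ∉ μ := by simpa using hnot
    have hmemν : ∀ q : ℕ × ℕ, q ∈ ν ↔ q = (i, j) ∨ q ∈ μ := by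
      intro q
      rw [← mem_cells, hν, Finset.mem_insert, mem_cells]
    have hij : (i, j) ∈ ν := (hmemν _).2 (Or.inl rfl)
    constructor
    · refine jta_rowLen_eq hnot' (fun m hm => ?_)
      have hmν : (i, m) ∈ ν := ν.up_left_mem le_rfl hm.le hij
      rcases (hmemν _).1 hmν with h | h
      · exfalso; rw [Prod.mk.injEq] at h; omega
      · exact h
    · refine jta_colLen_eq hnot' (fun m hm => ?_)
      have hmν : (m, j) ∈ ν := ν.up_left_mem hm.le le_rfl hij
      rcases (hmemν _).1 hmν with h | h
      · exfalso; rw [Prod.mk.injEq] at h; omega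
      · exact h
  · rintro ⟨h1, h2⟩
    dsimp only at h1 h2
    have hnot : (i, j) ∉ μ := by rw [mem_iff_lt_rowLen]; omega
    refine ⟨by simpa using hnot, ⟨insert (i, j) μ.cells, ?_⟩, rfl⟩
    rw [Finset.coe_insert]
    intro a b hba ha
    rcases ha with ha | ha
    · subst ha
      obtain ⟨hb1, hb2⟩ := Prod.mk_le_mk.1 hba
      by_cases hb : b = (i, j)
      · exact Set.mem_insert_iff.2 (Or.inl hb)
      · refine Set.mem_insert_iff.2 (Or.inr ?_)
        have hbne : b.1 ≠ i ∨ b.2 ≠ j := by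
          by_contra hc
          push_neg at hc
          exact hb (Prod.ext hc.1 hc.2)
        by_cases hb2' : b.2 < j
        · have : μ.rowLen i ≤ μ.rowLen b.1 := μ.rowLen_anti b.1 i hb1
          have : (b.1, b.2) ∈ μ := mem_iff_lt_rowLen.2 (by omega)
          simpa using this
        · have hb2e : b.2 = j := by omega
          have hb1' : b.1 < i := by omega
          have : (b.1, b.2) ∈ μ := mem_iff_lt_colLen.2 (by rw [hb2e]; omega)
          simpa using this
    · exact Set.mem_insert_iff.2 (Or.inr (μ.isLowerSet hba ha))

lemma jta_removable_iff {μ : YoungDiagram} {p : ℕ × ℕ} :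
    Removable μ p ↔ μ.rowLen p.1 = p.2 + 1 ∧ μ.colLen p.2 = p.1 + 1 := by
  obtain ⟨i, j⟩ := p
  constructor
  · rintro ⟨hmem, ν, hν⟩
    have hmem' : (i, j) ∈ μ := by simpa using hmem
    have hmemν : ∀ q : ℕ × ℕ, q ∈ ν ↔ q ≠ (i, j) ∧ q ∈ μ := by
      intro q
      rw [← mem_cells, hν, Finset.mem_erase, mem_cells]
    constructor
    · refine jta_rowLen_eq ?_ (fun m hm => μ.up_left_mem le_rfl (by omega) hmem')
      intro hc
      have h1 : (i, j + 1) ∈ ν := (hmemν _).2 ⟨by simp, hc⟩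
      have h2 : (i, j) ∈ ν := ν.up_left_mem le_rfl (by omega) h1
      exact ((hmemν _).1 h2).1 rfl
    · refine jta_colLen_eq ?_ (fun m hm => μ.up_left_mem (by omega) le_rfl hmem')
      intro hc
      have h1 : (i + 1, j) ∈ ν := (hmemν _).2 ⟨by simp, hc⟩
      have h2 : (i, j) ∈ ν := ν.up_left_mem (by omega) le_rfl h1
      exact ((hmemν _).1 h2).1 rfl
  · rintro ⟨h1, h2⟩
    dsimp only at h1 h2
    have hmem : (i, j) ∈ μ := mem_iff_lt_rowLen.2 (by omega)
    refine ⟨by simpa using hmem, ⟨μ.cells.erase (i, j), ?_⟩, rfl⟩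
    rw [Finset.coe_erase]
    intro a b hba ha
    obtain ⟨haμ, hane⟩ : a ∈ μ ∧ a ≠ (i, j) := by
      simpa [Set.mem_diff] using ha
    have hbμ : b ∈ μ := μ.isLowerSet hba (by simpa using haμ)
    have hbne : b ≠ (i, j) := by
      rintro rfl
      obtain ⟨ha1, ha2⟩ := Prod.mk_le_mk.1 hba
      have hr : μ.rowLen a.1 ≤ μ.rowLen i := μ.rowLen_anti i a.1 ha1
      have hma : a.2 < μ.rowLen a.1 := by
        have := mem_iff_lt_rowLen.1 (show (a.1, a.2) ∈ μ by simpa using haμ)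
        exact this
      have ha2e : a.2 = j := by omega
      have hc : μ.colLen a.2 ≤ μ.colLen j := le_of_eq (by rw [ha2e])
      have hma2 : a.1 < μ.colLen a.2 := by
        have := mem_iff_lt_colLen.1 (show (a.1, a.2) ∈ μ by simpa using haμ)
        exact this
      exact hane (Prod.ext (by omega) ha2e)
    exact ⟨by simpa using hbμ, by simpa using hbne⟩

lemma jta_strict_chain {f : ℕ → ℝ} {a N : ℕ}
    (h : ∀ m, a ≤ m → m + 1 ≤ N → f m < f (m + 1)) :
    ∀ m2 m1, a ≤ m1 → m1 < m2 → m2 ≤ N → f m1 < f m2 := by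
  intro m2
  induction m2 with
  | zero => omega
  | succ n ih =>
    intro m1 h1 h2 h3
    rcases eq_or_lt_of_le (Nat.lt_succ_iff.1 h2) with he | hl
    · subst he; exact h m1 h1 h3
    · exact (ih m1 h1 hl (by omega)).trans (h n (by omega) h3)

lemma jta_telescope (n : ℕ) (hn : 1 ≤ n) (f g : ℕ → ℝ) (E : ℕ → Prop) [DecidablePred E]
    (hfg : ∀ i, i + 1 < n → E i → f i = g (i + 1))
    (hg : ∀ i, i < n → g i ≠ 0) :
    ∏ i ∈ Finset.range n, (f i / g i) =
      (f (n - 1) * ∏ i ∈ (Finset.range (n - 1)).filter (fun i => ¬ E i), f i) /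
        (g 0 * ∏ i ∈ (Finset.range (n - 1)).filter (fun i => ¬ E i), g (i + 1)) := by
  obtain ⟨m, rfl⟩ : ∃ m, n = m + 1 := ⟨n - 1, by omega⟩
  simp only [Nat.add_sub_cancel]
  rw [Finset.prod_div_distrib, Finset.prod_range_succ, Finset.prod_range_succ']
  rw [← Finset.prod_filter_mul_prod_filter_not (Finset.range m) E f,
    ← Finset.prod_filter_mul_prod_filter_not (Finset.range m) E (fun i => g (i + 1))]
  have hEeq : ∏ i ∈ (Finset.range m).filter (fun i => E i), f i =
      ∏ i ∈ (Finset.range m).filter (fun i => E i), g (i + 1) := by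
    refine Finset.prod_congr rfl (fun i hi => ?_)
    simp only [Finset.mem_filter, Finset.mem_range] at hi
    exact hfg i (by omega) hi.2
  rw [hEeq]
  have hA : (∏ i ∈ (Finset.range m).filter (fun i => E i), g (i + 1)) ≠ 0 :=
    Finset.prod_ne_zero_iff.2 (fun i hi => by
      simp only [Finset.mem_filter, Finset.mem_range] at hi
      exact hg (i + 1) (by omega))
  have hg0 : g 0 ≠ 0 := hg 0 (by omega)
  have hB : (∏ i ∈ (Finset.range m).filter (fun i => ¬ E i), g (i + 1)) ≠ 0 :=
    Finset.prod_ne_zero_iff.2 (fun i hi => by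
      simp only [Finset.mem_filter, Finset.mem_range] at hi
      exact hg (i + 1) (by omega))
  field_simp

lemma jta_step1 (α : ℝ) (hα : 0 < α) (lam Λ : YoungDiagram) (r c : ℕ)
    (hr : lam.rowLen r = c) (hcl : lam.colLen c = r)
    (hnotin : (r, c) ∉ lam.cells)
    (hΛ : Λ.cells = insert (r, c) lam.cells) :
    jackMult α lam Λ * phiJack α Λ / phiJack α lam =
      (∏ i ∈ Finset.range r,
        ((α * c - r) - (α * (lam.rowLen i : ℝ) - ((i : ℝ) + 1))) /
          ((α * c - r) - (α * (lam.rowLen i : ℝ) - (i : ℝ)))) *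
      (∏ j ∈ Finset.range c,
        ((α * c - r) - (α * ((j : ℝ) + 1) - (lam.colLen j : ℝ))) /
          ((α * c - r) - (α * (j : ℝ) - (lam.colLen j : ℝ)))) := by
  classical
  have hmemrow : ∀ j, j < c → (r, j) ∈ lam := fun j hj => mem_iff_lt_rowLen.2 (by omega)
  have hmemcol : ∀ i, i < r → (i, c) ∈ lam := fun i hi => mem_iff_lt_colLen.2 (by omega)
  have hCge : ∀ j, j < c → r + 1 ≤ lam.colLen j := fun j hj =>
    mem_iff_lt_colLen.1 (hmemrow j hj)
  have hRge : ∀ i, i < r → c + 1 ≤ lam.rowLen i := fun i hi =>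
    mem_iff_lt_rowLen.1 (hmemcol i hi)
  have hΛmem : ∀ q : ℕ × ℕ, q ∈ Λ ↔ q = (r, c) ∨ q ∈ lam := by
    intro q; rw [← mem_cells, hΛ, Finset.mem_insert, mem_cells]
  have hΛrowr : Λ.rowLen r = c + 1 := by
    refine jta_rowLen_eq ?_ (fun m hm => ?_)
    · rw [hΛmem]; push_neg
      refine ⟨by simp, ?_⟩
      rw [mem_iff_lt_rowLen]; omega
    · rw [hΛmem]
      rcases Nat.lt_or_ge m c with h | h
      · exact Or.inr (hmemrow m h)
      · have : m = c := by omega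
        subst this; exact Or.inl rfl
  have hΛrow : ∀ i, i ≠ r → Λ.rowLen i = lam.rowLen i := by
    intro i hi
    refine jta_rowLen_eq ?_ (fun m hm => (hΛmem _).2 (Or.inr (mem_iff_lt_rowLen.2 hm)))
    rw [hΛmem]; push_neg
    refine ⟨by simp [hi], ?_⟩
    rw [mem_iff_lt_rowLen]; omega
  have hΛcolc : Λ.colLen c = r + 1 := by
    refine jta_colLen_eq ?_ (fun m hm => ?_)
    · rw [hΛmem]; push_neg
      refine ⟨by simp, ?_⟩
      rw [mem_iff_lt_colLen]; omega
    · rw [hΛmem]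
      rcases Nat.lt_or_ge m r with h | h
      · exact Or.inr (hmemcol m h)
      · have : m = r := by omega
        subst this; exact Or.inl rfl
  have hΛcol : ∀ j, j ≠ c → Λ.colLen j = lam.colLen j := by
    intro j hj
    refine jta_colLen_eq ?_ (fun m hm => (hΛmem _).2 (Or.inr (mem_iff_lt_colLen.2 hm)))
    rw [hΛmem]; push_neg
    refine ⟨by simp [hj], ?_⟩
    rw [mem_iff_lt_colLen]; omega
  -- difference is the single box
  have hκsets : Λ.cells \ lam.cells = {(r, c)} := by
    ext q
    simp only [Finset.mem_sdiff, hΛ, Finset.mem_insert, Finset.mem_singleton]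
    constructor
    · rintro ⟨h | h, h2⟩
      · exact h
      · exact absurd h h2
    · rintro rfl; exact ⟨Or.inl rfl, hnotin⟩
  have hcolfilter : lam.cells.filter (fun b => b.2 = c) =
      (Finset.range r).image (fun i => (i, c)) := by
    ext q
    obtain ⟨i, j⟩ := q
    simp only [Finset.mem_filter, Finset.mem_image, Finset.mem_range, mem_cells]
    constructor
    · rintro ⟨hmem, h2⟩
      subst h2
      exact ⟨i, by have := mem_iff_lt_colLen.1 hmem; omega, rfl⟩
    · rintro ⟨i', hi', h⟩
      rw [Prod.mk.injEq] at h
      obtain ⟨rfl, rfl⟩ := h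
      exact ⟨hmemcol _ hi', rfl⟩
  have hrowfilter : lam.cells.filter (fun b => b.1 = r) =
      (Finset.range c).image (fun j => (r, j)) := by
    ext q
    obtain ⟨i, j⟩ := q
    simp only [Finset.mem_filter, Finset.mem_image, Finset.mem_range, mem_cells]
    constructor
    · rintro ⟨hmem, h2⟩
      subst h2
      exact ⟨j, by have := mem_iff_lt_rowLen.1 hmem; omega, rfl⟩
    · rintro ⟨j', hj', h⟩
      rw [Prod.mk.injEq] at h
      obtain ⟨rfl, rfl⟩ := h
      exact ⟨hmemrow _ hj', rfl⟩
  -- κ as a product over the column of the new box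
  have hκ : jackMult α lam Λ = ∏ i ∈ Finset.range r,
      (((armLen lam (i, c) : ℝ) * α + (legLen lam (i, c) : ℝ) + 2) *
          (((armLen lam (i, c) : ℝ) + 1) * α + (legLen lam (i, c) : ℝ))) /
        ((((armLen lam (i, c) : ℝ) + 1) * α + (legLen lam (i, c) : ℝ) + 1) *
          ((armLen lam (i, c) : ℝ) * α + (legLen lam (i, c) : ℝ) + 1)) := by
    unfold jackMult
    rw [hκsets, Finset.prod_singleton]
    have : (lam.cells.filter (fun b => b.2 = (r, c).2)) =
        (Finset.range r).image (fun i => (i, c)) := hcolfilter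
    rw [this, Finset.prod_image (fun a _ b _ h => by rw [Prod.mk.injEq] at h; exact h.1)]
  have hHpos : ∀ (μ : YoungDiagram) (b : ℕ × ℕ),
      0 < (armLen μ b : ℝ) * α + (legLen μ b : ℝ) + 1 := by
    intro μ b
    have h1 : (0:ℝ) ≤ (armLen μ b : ℝ) := Nat.cast_nonneg _
    have h2 : (0:ℝ) ≤ (legLen μ b : ℝ) := Nat.cast_nonneg _
    nlinarith
  have hphilam_ne : phiJack α lam ≠ 0 := by
    unfold phiJack
    exact Finset.prod_ne_zero_iff.2 (fun b _ => inv_ne_zero (hHpos lam b).ne')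
  have hphiΛ : phiJack α Λ = ∏ b ∈ lam.cells,
      ((armLen Λ b : ℝ) * α + (legLen Λ b : ℝ) + 1)⁻¹ := by
    unfold phiJack
    rw [show Λ.cells = insert (r, c) lam.cells from hΛ, Finset.prod_insert hnotin]
    have ha0 : armLen Λ (r, c) = 0 := by simp [armLen, hΛrowr]
    have hl0 : legLen Λ (r, c) = 0 := by simp [legLen, hΛcolc]
    rw [ha0, hl0]
    norm_num
  have hsplit : (∏ b ∈ lam.cells, ((armLen Λ b : ℝ) * α + (legLen Λ b : ℝ) + 1)⁻¹)
      = phiJack α lam *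
        ((∏ i ∈ Finset.range r,
            (((armLen lam (i, c) : ℝ) * α + (legLen lam (i, c) : ℝ) + 1) /
             ((armLen Λ (i, c) : ℝ) * α + (legLen Λ (i, c) : ℝ) + 1))) *
         (∏ j ∈ Finset.range c,
            (((armLen lam (r, j) : ℝ) * α + (legLen lam (r, j) : ℝ) + 1) /
             ((armLen Λ (r, j) : ℝ) * α + (legLen Λ (r, j) : ℝ) + 1)))) := by
    have hpoint : ∀ b ∈ lam.cells,
        ((armLen Λ b : ℝ) * α + (legLen Λ b : ℝ) + 1)⁻¹
          = ((armLen lam b : ℝ) * α + (legLen lam b : ℝ) + 1)⁻¹ *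
            (((armLen lam b : ℝ) * α + (legLen lam b : ℝ) + 1) /
             ((armLen Λ b : ℝ) * α + (legLen Λ b : ℝ) + 1)) := by
      intro b _
      rw [div_eq_mul_inv, ← mul_assoc, inv_mul_cancel₀ (hHpos lam b).ne', one_mul]
    rw [Finset.prod_congr rfl hpoint, Finset.prod_mul_distrib]
    unfold phiJack
    congr 1
    rw [← Finset.prod_filter_mul_prod_filter_not lam.cells (fun b => b.2 = c)
      (fun b => (((armLen lam b : ℝ) * α + (legLen lam b : ℝ) + 1) /
             ((armLen Λ b : ℝ) * α + (legLen Λ b : ℝ) + 1)))]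
    rw [← Finset.prod_filter_mul_prod_filter_not (lam.cells.filter (fun b => ¬ b.2 = c))
      (fun b => b.1 = r)
      (fun b => (((armLen lam b : ℝ) * α + (legLen lam b : ℝ) + 1) /
             ((armLen Λ b : ℝ) * α + (legLen Λ b : ℝ) + 1)))]
    have hone : ∀ b ∈ (lam.cells.filter (fun b => ¬ b.2 = c)).filter (fun b => ¬ b.1 = r),
        (((armLen lam b : ℝ) * α + (legLen lam b : ℝ) + 1) /
         ((armLen Λ b : ℝ) * α + (legLen Λ b : ℝ) + 1)) = 1 := by
      intro b hb
      simp only [Finset.mem_filter] at hb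
      obtain ⟨⟨hbmem, hb2⟩, hb1⟩ := hb
      have ha : armLen Λ b = armLen lam b := by unfold armLen; rw [hΛrow b.1 hb1]
      have hl : legLen Λ b = legLen lam b := by unfold legLen; rw [hΛcol b.2 hb2]
      rw [ha, hl, div_self (hHpos lam b).ne']
    rw [Finset.prod_congr rfl hone, Finset.prod_const_one, mul_one]
    have hff : (lam.cells.filter (fun b => ¬ b.2 = c)).filter (fun b => b.1 = r)
        = lam.cells.filter (fun b => b.1 = r) := by
      rw [Finset.filter_filter]
      refine Finset.filter_congr (fun b hb => ?_)
      constructor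
      · rintro ⟨_, h⟩; exact h
      · intro h
        refine ⟨?_, h⟩
        have hblt : b.2 < lam.rowLen b.1 := by
          have : (b.1, b.2) ∈ lam := by simpa using hb
          exact mem_iff_lt_rowLen.1 this
        rw [h] at hblt
        omega
    rw [hff, hcolfilter, hrowfilter,
      Finset.prod_image (fun a _ b _ h => by rw [Prod.mk.injEq] at h; exact h.1),
      Finset.prod_image (fun a _ b _ h => by rw [Prod.mk.injEq] at h; exact h.2),
      mul_comm]
  rw [hκ, hphiΛ, hsplit, mul_div_assoc, mul_div_cancel_left₀ _ hphilam_ne]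
  rw [← mul_assoc, ← Finset.prod_mul_distrib]
  congr 1
  · refine Finset.prod_congr rfl (fun i hi => ?_)
    rw [Finset.mem_range] at hi
    have h1 : c + 1 ≤ lam.rowLen i := hRge i hi
    have hA : (armLen lam (i, c) : ℝ) = (lam.rowLen i : ℝ) - (c : ℝ) - 1 := by
      have h2 : armLen lam (i, c) = lam.rowLen i - (c + 1) := by
        show lam.rowLen i - c - 1 = _; omega
      rw [h2, Nat.cast_sub (by omega)]
      push_cast; ring
    have hL : (legLen lam (i, c) : ℝ) = (r : ℝ) - (i : ℝ) - 1 := by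
      have h2 : legLen lam (i, c) = r - (i + 1) := by
        show lam.colLen c - i - 1 = _; omega
      rw [h2, Nat.cast_sub (by omega)]
      push_cast; ring
    have hAΛ : armLen Λ (i, c) = armLen lam (i, c) := by
      show Λ.rowLen i - c - 1 = lam.rowLen i - c - 1
      rw [hΛrow i (by omega)]
    have hLΛ : (legLen Λ (i, c) : ℝ) = (r : ℝ) - (i : ℝ) := by
      have h2 : legLen Λ (i, c) = r - i := by
        show Λ.colLen c - i - 1 = _; rw [hΛcolc]; omega
      rw [h2, Nat.cast_sub (by omega)]
    rw [hAΛ, hA, hL, hLΛ]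
    have hc1 : (c : ℝ) + 1 ≤ (lam.rowLen i : ℝ) := by exact_mod_cast h1
    have hi1 : (i : ℝ) + 1 ≤ (r : ℝ) := by exact_mod_cast hi
    set A := (lam.rowLen i : ℝ) with hAdef
    have hAc : 0 ≤ A - c - 1 := by linarith
    have hri : 0 ≤ (r : ℝ) - i - 1 := by linarith
    have haux : 0 ≤ (A - c - 1) * α := mul_nonneg hAc hα.le
    have n1 : (0:ℝ) < (A - c - 1) * α + ((r : ℝ) - i - 1) + 1 := by linarith
    have haux2 : 0 ≤ ((A - c - 1) + 1) * α := mul_nonneg (by linarith) hα.le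
    have n2 : (0:ℝ) < ((A - c - 1) + 1) * α + ((r : ℝ) - i - 1) + 1 := by linarith
    have n4 : (0:ℝ) < (A - c - 1) * α + ((r : ℝ) - i) + 1 := by linarith
    have haux3 : α * ((c : ℝ) + 1) ≤ α * A := mul_le_mul_of_nonneg_left hc1 hα.le
    have n5 : (α * (c : ℝ) - r - (α * A - i)) < 0 := by nlinarith
    rw [div_mul_div_comm, div_eq_div_iff (mul_ne_zero (mul_ne_zero n2.ne' n1.ne') n4.ne') n5.ne]
    ring
  · refine Finset.prod_congr rfl (fun j hj => ?_)
    rw [Finset.mem_range] at hj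
    have h1 : r + 1 ≤ lam.colLen j := hCge j hj
    have hA : (armLen lam (r, j) : ℝ) = (c : ℝ) - (j : ℝ) - 1 := by
      have h2 : armLen lam (r, j) = c - (j + 1) := by
        show lam.rowLen r - j - 1 = _; omega
      rw [h2, Nat.cast_sub (by omega)]
      push_cast; ring
    have hL : (legLen lam (r, j) : ℝ) = (lam.colLen j : ℝ) - (r : ℝ) - 1 := by
      have h2 : legLen lam (r, j) = lam.colLen j - (r + 1) := by
        show lam.colLen j - r - 1 = _; omega
      rw [h2, Nat.cast_sub (by omega)]
      push_cast; ring
    have hAΛ : (armLen Λ (r, j) : ℝ) = (c : ℝ) - (j : ℝ) := by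
      have h2 : armLen Λ (r, j) = c - j := by
        show Λ.rowLen r - j - 1 = _; rw [hΛrowr]; omega
      rw [h2, Nat.cast_sub (by omega)]
    have hLΛ : legLen Λ (r, j) = legLen lam (r, j) := by
      show Λ.colLen j - r - 1 = lam.colLen j - r - 1
      rw [hΛcol j (by omega)]
    rw [hLΛ, hA, hL, hAΛ]
    have hc1 : (r : ℝ) + 1 ≤ (lam.colLen j : ℝ) := by exact_mod_cast h1
    have hj1 : (j : ℝ) + 1 ≤ (c : ℝ) := by exact_mod_cast hj
    set C := (lam.colLen j : ℝ) with hCdef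
    have hcj : 0 ≤ (c : ℝ) - j - 1 := by linarith
    have hCr : 0 ≤ C - r - 1 := by linarith
    have haux : 0 ≤ ((c : ℝ) - j) * α := mul_nonneg (by linarith) hα.le
    have n1 : (0:ℝ) < ((c : ℝ) - j) * α + (C - r - 1) + 1 := by linarith
    have haux2 : α * ((j : ℝ) + 1) ≤ α * c := mul_le_mul_of_nonneg_left hj1 hα.le
    have n2 : (0:ℝ) < α * (c : ℝ) - r - (α * j - C) := by linarith
    rw [div_eq_div_iff n1.ne' n2.ne']
    ring

lemma jta_colprod (α : ℝ) (hα : 0 < α) (lam : YoungDiagram) (r c : ℕ)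
    (hr : lam.rowLen r = c) (hcl : lam.colLen c = r) :
    (∏ j ∈ Finset.range c,
        ((α * c - r) - (α * ((j : ℝ) + 1) - (lam.colLen j : ℝ))) /
          ((α * c - r) - (α * (j : ℝ) - (lam.colLen j : ℝ))))
      = (∏ j ∈ (Finset.range c).filter (fun j => lam.rowLen (lam.colLen j - 1) = j + 1),
          ((α * c - r) - (α * ((j : ℝ) + 1) - (lam.colLen j : ℝ)))) /
        (∏ j ∈ (Finset.range c).filter (fun j => lam.rowLen (lam.colLen j) = j),
          ((α * c - r) - (α * (j : ℝ) - (lam.colLen j : ℝ)))) := by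
  classical
  rcases Nat.eq_zero_or_pos c with hc0 | hc0
  · subst hc0; simp
  have hCge : ∀ j, j < c → r + 1 ≤ lam.colLen j := by
    intro j hj
    exact mem_iff_lt_colLen.1 (mem_iff_lt_rowLen.2 (by omega : j < lam.rowLen r))
  have hremlast : lam.rowLen (lam.colLen (c - 1) - 1) = c - 1 + 1 := by
    have h1 : r + 1 ≤ lam.colLen (c - 1) := hCge (c - 1) (by omega)
    have h2 : (lam.colLen (c - 1) - 1, c - 1) ∈ lam := mem_iff_lt_colLen.2 (by omega)
    have h3 : (lam.colLen (c - 1) - 1, c) ∉ lam := by rw [mem_iff_lt_colLen]; omega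
    have h4 := mem_iff_lt_rowLen.1 h2
    have h5 : ¬ (c < lam.rowLen (lam.colLen (c - 1) - 1)) := fun h => h3 (mem_iff_lt_rowLen.2 h)
    omega
  have hremiff : ∀ j, j + 1 < c →
      (lam.rowLen (lam.colLen j - 1) = j + 1 ↔ ¬ lam.colLen j = lam.colLen (j + 1)) := by
    intro j hj
    have h1 : r + 1 ≤ lam.colLen j := hCge j (by omega)
    have hanti : lam.colLen (j + 1) ≤ lam.colLen j := lam.colLen_anti j (j + 1) (by omega)
    constructor
    · intro h heq
      have hmem : (lam.colLen j - 1, j + 1) ∈ lam := mem_iff_lt_colLen.2 (by omega)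
      have := mem_iff_lt_rowLen.1 hmem
      omega
    · intro hne
      have hmem : (lam.colLen j - 1, j) ∈ lam := mem_iff_lt_colLen.2 (by omega)
      have h4 := mem_iff_lt_rowLen.1 hmem
      have hnot : (lam.colLen j - 1, j + 1) ∉ lam := by rw [mem_iff_lt_colLen]; omega
      have h5 : ¬ (j + 1 < lam.rowLen (lam.colLen j - 1)) := fun h => hnot (mem_iff_lt_rowLen.2 h)
      omega
  have hadd0 : lam.rowLen (lam.colLen 0) = 0 := by
    have h3 : (lam.colLen 0, 0) ∉ lam := by rw [mem_iff_lt_colLen]; omega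
    have h5 : ¬ (0 < lam.rowLen (lam.colLen 0)) := fun h => h3 (mem_iff_lt_rowLen.2 h)
    omega
  have haddiff : ∀ i, i + 1 < c →
      (lam.rowLen (lam.colLen (i + 1)) = i + 1 ↔ ¬ lam.colLen i = lam.colLen (i + 1)) := by
    intro i hi
    have hanti : lam.colLen (i + 1) ≤ lam.colLen i := lam.colLen_anti i (i + 1) (by omega)
    constructor
    · intro h heq
      have hmem : (lam.colLen (i + 1), i) ∈ lam := mem_iff_lt_rowLen.2 (by omega)
      have := mem_iff_lt_colLen.1 hmem
      omega
    · intro hne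
      have hmem : (lam.colLen (i + 1), i) ∈ lam := mem_iff_lt_colLen.2 (by omega)
      have h4 := mem_iff_lt_rowLen.1 hmem
      have hnot : (lam.colLen (i + 1), i + 1) ∉ lam := by rw [mem_iff_lt_colLen]; omega
      have h5 : ¬ (i + 1 < lam.rowLen (lam.colLen (i + 1))) := fun h => hnot (mem_iff_lt_rowLen.2 h)
      omega
  rw [jta_telescope c hc0
    (fun j => (α * c - r) - (α * ((j : ℝ) + 1) - (lam.colLen j : ℝ)))
    (fun j => (α * c - r) - (α * (j : ℝ) - (lam.colLen j : ℝ)))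
    (fun j => lam.colLen j = lam.colLen (j + 1))
    (fun j hj h => by push_cast [h]; try ring)
    (fun j hj => by
      have h1 : r + 1 ≤ lam.colLen j := hCge j hj
      have h1' : (r : ℝ) + 1 ≤ (lam.colLen j : ℝ) := by exact_mod_cast h1
      have hj1 : (j : ℝ) + 1 ≤ (c : ℝ) := by exact_mod_cast hj
      have haux : α * ((j : ℝ) + 1) ≤ α * c := mul_le_mul_of_nonneg_left hj1 hα.le
      have : (0:ℝ) < (α * c - r) - (α * (j : ℝ) - (lam.colLen j : ℝ)) := by linarith
      exact this.ne')]
  have hJrem : (Finset.range c).filter (fun j => lam.rowLen (lam.colLen j - 1) = j + 1)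
      = insert (c - 1) ((Finset.range (c - 1)).filter
          (fun j => ¬ lam.colLen j = lam.colLen (j + 1))) := by
    ext j
    simp only [Finset.mem_filter, Finset.mem_insert, Finset.mem_range]
    constructor
    · rintro ⟨hjc, hrem⟩
      by_cases h : j = c - 1
      · exact Or.inl h
      · exact Or.inr ⟨by omega, (hremiff j (by omega)).1 hrem⟩
    · rintro (rfl | ⟨hj, hne⟩)
      · exact ⟨by omega, hremlast⟩
      · exact ⟨by omega, (hremiff j (by omega)).2 hne⟩
  have hJadd : (Finset.range c).filter (fun j => lam.rowLen (lam.colLen j) = j)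
      = insert 0 (((Finset.range (c - 1)).filter
          (fun j => ¬ lam.colLen j = lam.colLen (j + 1))).image (fun i => i + 1)) := by
    ext j
    simp only [Finset.mem_filter, Finset.mem_insert, Finset.mem_range, Finset.mem_image]
    constructor
    · rintro ⟨hjc, hadd⟩
      rcases j with _ | i
      · exact Or.inl rfl
      · exact Or.inr ⟨i, ⟨by omega, (haddiff i (by omega)).1 hadd⟩, rfl⟩
    · rintro (rfl | ⟨i, ⟨hi, hne⟩, rfl⟩)
      · exact ⟨hc0, hadd0⟩
      · exact ⟨by omega, (haddiff i (by omega)).2 hne⟩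
  rw [hJrem, hJadd, Finset.prod_insert (by
      intro h
      have := (Finset.mem_filter.1 h).1
      rw [Finset.mem_range] at this
      omega),
    Finset.prod_insert (by
      intro h
      obtain ⟨i, _, hi⟩ := Finset.mem_image.1 h
      omega),
    Finset.prod_image (fun a _ b _ h => by omega)]

lemma jta_rowprod (α : ℝ) (hα : 0 < α) (lam : YoungDiagram) (r c : ℕ)
    (hr : lam.rowLen r = c) (hcl : lam.colLen c = r) :
    (∏ i ∈ Finset.range r,
        ((α * c - r) - (α * (lam.rowLen i : ℝ) - ((i : ℝ) + 1))) /
          ((α * c - r) - (α * (lam.rowLen i : ℝ) - (i : ℝ))))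
      = (∏ i ∈ (Finset.range r).filter (fun i => lam.colLen (lam.rowLen i - 1) = i + 1),
          ((α * c - r) - (α * (lam.rowLen i : ℝ) - ((i : ℝ) + 1)))) /
        (∏ i ∈ (Finset.range r).filter (fun i => lam.colLen (lam.rowLen i) = i),
          ((α * c - r) - (α * (lam.rowLen i : ℝ) - (i : ℝ)))) := by
  classical
  rcases Nat.eq_zero_or_pos r with hr0 | hr0
  · subst hr0; simp
  have hRge : ∀ i, i < r → c + 1 ≤ lam.rowLen i := by
    intro i hi
    exact mem_iff_lt_rowLen.1 (mem_iff_lt_colLen.2 (by omega : i < lam.colLen c))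
  have hremlast : lam.colLen (lam.rowLen (r - 1) - 1) = r - 1 + 1 := by
    have h1 : c + 1 ≤ lam.rowLen (r - 1) := hRge (r - 1) (by omega)
    have h2 : (r - 1, lam.rowLen (r - 1) - 1) ∈ lam := mem_iff_lt_rowLen.2 (by omega)
    have h3 : (r, lam.rowLen (r - 1) - 1) ∉ lam := by rw [mem_iff_lt_rowLen]; omega
    have h4 := mem_iff_lt_colLen.1 h2
    have h5 : ¬ (r < lam.colLen (lam.rowLen (r - 1) - 1)) := fun h => h3 (mem_iff_lt_colLen.2 h)
    omega
  have hremiff : ∀ i, i + 1 < r →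
      (lam.colLen (lam.rowLen i - 1) = i + 1 ↔ ¬ lam.rowLen i = lam.rowLen (i + 1)) := by
    intro i hi
    have h1 : c + 1 ≤ lam.rowLen i := hRge i (by omega)
    have hanti : lam.rowLen (i + 1) ≤ lam.rowLen i := lam.rowLen_anti i (i + 1) (by omega)
    constructor
    · intro h heq
      have hmem : (i + 1, lam.rowLen i - 1) ∈ lam := mem_iff_lt_rowLen.2 (by omega)
      have := mem_iff_lt_colLen.1 hmem
      omega
    · intro hne
      have hmem : (i, lam.rowLen i - 1) ∈ lam := mem_iff_lt_rowLen.2 (by omega)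
      have h4 := mem_iff_lt_colLen.1 hmem
      have hnot : (i + 1, lam.rowLen i - 1) ∉ lam := by rw [mem_iff_lt_rowLen]; omega
      have h5 : ¬ (i + 1 < lam.colLen (lam.rowLen i - 1)) := fun h => hnot (mem_iff_lt_colLen.2 h)
      omega
  have hadd0 : lam.colLen (lam.rowLen 0) = 0 := by
    have h3 : (0, lam.rowLen 0) ∉ lam := by rw [mem_iff_lt_rowLen]; omega
    have h5 : ¬ (0 < lam.colLen (lam.rowLen 0)) := fun h => h3 (mem_iff_lt_colLen.2 h)
    omega
  have haddiff : ∀ i, i + 1 < r →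
      (lam.colLen (lam.rowLen (i + 1)) = i + 1 ↔ ¬ lam.rowLen i = lam.rowLen (i + 1)) := by
    intro i hi
    have hanti : lam.rowLen (i + 1) ≤ lam.rowLen i := lam.rowLen_anti i (i + 1) (by omega)
    constructor
    · intro h heq
      have hmem : (i, lam.rowLen (i + 1)) ∈ lam := mem_iff_lt_colLen.2 (by omega)
      have := mem_iff_lt_rowLen.1 hmem
      omega
    · intro hne
      have hmem : (i, lam.rowLen (i + 1)) ∈ lam := mem_iff_lt_rowLen.2 (by omega)
      have h4 := mem_iff_lt_colLen.1 hmem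
      have hnot : (i + 1, lam.rowLen (i + 1)) ∉ lam := by rw [mem_iff_lt_rowLen]; omega
      have h5 : ¬ (i + 1 < lam.colLen (lam.rowLen (i + 1))) := fun h => hnot (mem_iff_lt_colLen.2 h)
      omega
  rw [jta_telescope r hr0
    (fun i => (α * c - r) - (α * (lam.rowLen i : ℝ) - ((i : ℝ) + 1)))
    (fun i => (α * c - r) - (α * (lam.rowLen i : ℝ) - (i : ℝ)))
    (fun i => lam.rowLen i = lam.rowLen (i + 1))
    (fun i hi h => by push_cast [h]; try ring)
    (fun i hi => by
      have h1 : c + 1 ≤ lam.rowLen i := hRge i hi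
      have h1' : (c : ℝ) + 1 ≤ (lam.rowLen i : ℝ) := by exact_mod_cast h1
      have hi1 : (i : ℝ) + 1 ≤ (r : ℝ) := by exact_mod_cast hi
      have haux : α * ((c : ℝ) + 1) ≤ α * (lam.rowLen i : ℝ) :=
        mul_le_mul_of_nonneg_left h1' hα.le
      have : ((α * c - r) - (α * (lam.rowLen i : ℝ) - (i : ℝ))) < 0 := by linarith
      exact this.ne)]
  have hJrem : (Finset.range r).filter (fun i => lam.colLen (lam.rowLen i - 1) = i + 1)
      = insert (r - 1) ((Finset.range (r - 1)).filter
          (fun i => ¬ lam.rowLen i = lam.rowLen (i + 1))) := by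
    ext i
    simp only [Finset.mem_filter, Finset.mem_insert, Finset.mem_range]
    constructor
    · rintro ⟨hic, hrem⟩
      by_cases h : i = r - 1
      · exact Or.inl h
      · exact Or.inr ⟨by omega, (hremiff i (by omega)).1 hrem⟩
    · rintro (rfl | ⟨hi, hne⟩)
      · exact ⟨by omega, hremlast⟩
      · exact ⟨by omega, (hremiff i (by omega)).2 hne⟩
  have hJadd : (Finset.range r).filter (fun i => lam.colLen (lam.rowLen i) = i)
      = insert 0 (((Finset.range (r - 1)).filter
          (fun i => ¬ lam.rowLen i = lam.rowLen (i + 1))).image (fun i => i + 1)) := by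
    ext i
    simp only [Finset.mem_filter, Finset.mem_insert, Finset.mem_range, Finset.mem_image]
    constructor
    · rintro ⟨hic, hadd⟩
      rcases i with _ | i'
      · exact Or.inl rfl
      · exact Or.inr ⟨i', ⟨by omega, (haddiff i' (by omega)).1 hadd⟩, rfl⟩
    · rintro (rfl | ⟨i', ⟨hi', hne⟩, rfl⟩)
      · exact ⟨hr0, hadd0⟩
      · exact ⟨by omega, (haddiff i' (by omega)).2 hne⟩
  rw [hJrem, hJadd, Finset.prod_insert (by
      intro h
      have := (Finset.mem_filter.1 h).1
      rw [Finset.mem_range] at this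
      omega),
    Finset.prod_insert (by
      intro h
      obtain ⟨i', _, hi'⟩ := Finset.mem_image.1 h
      omega),
    Finset.prod_image (fun a _ b _ h => by omega)]

end JTAAux

/-- For `Λ` obtained from `λ` by adding the addable box of α-content `x_k(α)`:
`κ_α(λ,Λ) φ(Λ)/φ(λ) = ∏_{i=1}^{k-1} (x_k−y_i)/(x_k−x_i) · ∏_{j=k+1}^{d} (x_k−y_{j-1})/(x_k−x_j)`,
where `x₁(α) < y₁(α) < ⋯ < y_{d−1}(α) < x_d(α)` are the interlacing sequences of `λ`. -/
theorem jack_transition_eq_analytic (α : ℝ) (hα : 0 < α)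
    (lam Λ : YoungDiagram)
    (d k : ℕ) (hd : 1 ≤ d) (hk1 : 1 ≤ k) (hk2 : k ≤ d)
    (x y : ℕ → ℝ)
    -- the sequences interlace: x₁ < y₁ < x₂ < ⋯ < y_{d-1} < x_d
    (hinter : ∀ m, 1 ≤ m → m ≤ d - 1 → x m < y m ∧ y m < x (m + 1))
    -- x₁(α),…,x_d(α) are exactly the α-contents of the addable boxes of λ
    (hx1 : ∀ m, 1 ≤ m → m ≤ d → ∃ c, Addable lam c ∧ alphaContent α c = x m)
    (hx2 : ∀ c, Addable lam c → ∃ m, 1 ≤ m ∧ m ≤ d ∧ alphaContent α c = x m)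
    -- y₁(α),…,y_{d-1}(α) are exactly the upper α-contents of the removable boxes of λ
    (hy1 : ∀ m, 1 ≤ m → m ≤ d - 1 → ∃ c, Removable lam c ∧ upperAlphaContent α c = y m)
    (hy2 : ∀ c, Removable lam c → ∃ m, 1 ≤ m ∧ m ≤ d - 1 ∧ upperAlphaContent α c = y m)
    -- Λ is obtained from λ by adding the addable box of α-content x k
    (b0 : ℕ × ℕ) (hb0 : Addable lam b0) (hb0x : alphaContent α b0 = x k)
    (hΛ : Λ.cells = insert b0 lam.cells) :
    jackMult α lam Λ * phiJack α Λ / phiJack α lam =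
      (∏ i ∈ Finset.Icc 1 (k - 1), (x k - y i) / (x k - x i)) *
        ∏ j ∈ Finset.Icc (k + 1) d, (x k - y (j - 1)) / (x k - x j) := by
  classical
  obtain ⟨r, c⟩ := b0
  have hr : lam.rowLen r = c := (jta_addable_iff.1 hb0).1
  have hcl : lam.colLen c = r := (jta_addable_iff.1 hb0).2
  have hnotin : (r, c) ∉ lam.cells := hb0.1
  have hxk : x k = α * c - r := by rw [← hb0x]; rfl
  -- strict monotonicity of the interlacing sequences
  have hxstep : ∀ m, 1 ≤ m → m + 1 ≤ d → x m < x (m + 1) := fun m h1 h2 =>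
    ((hinter m h1 (by omega)).1).trans (hinter m h1 (by omega)).2
  have hxmono : ∀ m1 m2, 1 ≤ m1 → m1 < m2 → m2 ≤ d → x m1 < x m2 :=
    fun m1 m2 h1 h2 h3 => jta_strict_chain hxstep m2 m1 h1 h2 h3
  have hystep : ∀ m, 1 ≤ m → m + 1 ≤ d - 1 → y m < y (m + 1) := fun m h1 h2 =>
    ((hinter m h1 (by omega)).2).trans (hinter (m + 1) (by omega) (by omega)).1
  have hymono : ∀ m1 m2, 1 ≤ m1 → m1 < m2 → m2 ≤ d - 1 → y m1 < y m2 :=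
    fun m1 m2 h1 h2 h3 => jta_strict_chain hystep m2 m1 h1 h2 h3
  have hyltxk : ∀ m, 1 ≤ m → m ≤ k - 1 → y m < x k := by
    intro m h1 h2
    have h3 := (hinter m h1 (by omega)).2
    rcases eq_or_lt_of_le (show m + 1 ≤ k by omega) with he | hl
    · rwa [he] at h3
    · exact h3.trans (hxmono (m + 1) k (by omega) hl hk2)
  have hxkylt : ∀ m, k ≤ m → m ≤ d - 1 → x k < y m := by
    intro m h1 h2
    have h3 := (hinter m (by omega) h2).1
    rcases eq_or_lt_of_le h1 with he | hl
    · rw [he]; exact h3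
    · exact (hxmono k m hk1 hl (by omega)).trans h3
  have hxltxk : ∀ m, 1 ≤ m → m ≤ k - 1 → x m < x k := fun m h1 h2 =>
    hxmono m k h1 (by omega) hk2
  have hxkxgt : ∀ m, k + 1 ≤ m → m ≤ d → x k < x m := fun m h1 h2 =>
    hxmono k m hk1 (by omega) h2
  -- geometry of lam around (r, c)
  have hmemrow : ∀ j, j < c → (r, j) ∈ lam := fun j hj =>
    YoungDiagram.mem_iff_lt_rowLen.2 (by omega)
  have hCge : ∀ j, j < c → r + 1 ≤ lam.colLen j := fun j hj =>
    YoungDiagram.mem_iff_lt_colLen.1 (hmemrow j hj)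
  have hmemcol : ∀ i, i < r → (i, c) ∈ lam := fun i hi =>
    YoungDiagram.mem_iff_lt_colLen.2 (by omega)
  have hRge : ∀ i, i < r → c + 1 ≤ lam.rowLen i := fun i hi =>
    YoungDiagram.mem_iff_lt_rowLen.1 (hmemcol i hi)
  -- the removable corners strictly left of the new box
  have hYlt : (Finset.Icc 1 (k - 1)).image y
      = ((Finset.range c).filter (fun j => lam.rowLen (lam.colLen j - 1) = j + 1)).image
          (fun j : ℕ => α * ((j : ℝ) + 1) - (lam.colLen j : ℝ)) := by
    ext t
    simp only [Finset.mem_image, Finset.mem_Icc, Finset.mem_filter, Finset.mem_range]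
    constructor
    · rintro ⟨m, ⟨hm1, hm2⟩, rfl⟩
      obtain ⟨p, hrem, hval⟩ := hy1 m hm1 (by omega)
      obtain ⟨hp1, hp2⟩ := jta_removable_iff.1 hrem
      unfold upperAlphaContent at hval
      have hvlt : y m < x k := hyltxk m hm1 hm2
      rw [hxk] at hvlt
      rw [← hval] at hvlt ⊢
      have hpc : p.2 < c := by
        by_contra hge
        push_neg at hge
        have h1 : lam.colLen p.2 ≤ lam.colLen c := lam.colLen_anti c p.2 hge
        have h2 : ((c : ℝ)) ≤ (p.2 : ℝ) := by exact_mod_cast hge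
        have h3 : ((p.1 : ℝ)) + 1 ≤ (r : ℝ) := by
          have : p.1 + 1 ≤ r := by omega
          exact_mod_cast this
        have h4 : α * ((c : ℝ)) ≤ α * (p.2 : ℝ) := mul_le_mul_of_nonneg_left h2 hα.le
        have h5 : α * ((p.2 : ℝ) + 1) = α * (p.2 : ℝ) + α := by ring
        linarith
      refine ⟨p.2, ⟨hpc, ?_⟩, ?_⟩
      · rw [hp2]
        simpa using hp1
      · rw [hp2]
        push_cast
        ring
    · rintro ⟨j, ⟨hjc, hrem⟩, rfl⟩
      have hC1 : r + 1 ≤ lam.colLen j := hCge j hjc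
      have hremv : Removable lam (lam.colLen j - 1, j) := by
        rw [jta_removable_iff]
        exact ⟨hrem, by show lam.colLen j = lam.colLen j - 1 + 1; omega⟩
      obtain ⟨m, hm1, hm2, hval⟩ := hy2 _ hremv
      unfold upperAlphaContent at hval
      have hcast : ((lam.colLen j - 1 : ℕ) : ℝ) + 1 = (lam.colLen j : ℝ) := by
        rw [Nat.cast_sub (by omega)]; ring
      rw [hcast] at hval
      have hlt : y m < x k := by
        rw [← hval, hxk]
        have hj1 : (j : ℝ) + 1 ≤ (c : ℝ) := by exact_mod_cast hjc
        have hC1' : (r : ℝ) + 1 ≤ (lam.colLen j : ℝ) := by exact_mod_cast hC1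
        have haux : α * ((j : ℝ) + 1) ≤ α * c := mul_le_mul_of_nonneg_left hj1 hα.le
        linarith
      have hmk : m ≤ k - 1 := by
        by_contra hmk
        push_neg at hmk
        exact absurd hlt (not_lt.2 (hxkylt m (by omega) hm2).le)
      exact ⟨m, ⟨hm1, hmk⟩, hval.symm⟩
  -- the addable corners strictly left of the new box
  have hXlt : (Finset.Icc 1 (k - 1)).image x
      = ((Finset.range c).filter (fun j => lam.rowLen (lam.colLen j) = j)).image
          (fun j : ℕ => α * (j : ℝ) - (lam.colLen j : ℝ)) := by
    ext t
    simp only [Finset.mem_image, Finset.mem_Icc, Finset.mem_filter, Finset.mem_range]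
    constructor
    · rintro ⟨m, ⟨hm1, hm2⟩, rfl⟩
      obtain ⟨p, hadd, hval⟩ := hx1 m hm1 (by omega)
      obtain ⟨hp1, hp2⟩ := jta_addable_iff.1 hadd
      unfold alphaContent at hval
      have hvlt : x m < x k := hxltxk m hm1 hm2
      rw [hxk] at hvlt
      rw [← hval] at hvlt ⊢
      have hpc : p.2 < c := by
        by_contra hge
        push_neg at hge
        have h1 : lam.colLen p.2 ≤ lam.colLen c := lam.colLen_anti c p.2 hge
        have h2 : ((c : ℝ)) ≤ (p.2 : ℝ) := by exact_mod_cast hge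
        have h3 : (p.1 : ℝ) ≤ (r : ℝ) := by
          have : p.1 ≤ r := by omega
          exact_mod_cast this
        have h4 : α * ((c : ℝ)) ≤ α * (p.2 : ℝ) := mul_le_mul_of_nonneg_left h2 hα.le
        linarith
      refine ⟨p.2, ⟨hpc, ?_⟩, ?_⟩
      · rw [hp2]; exact hp1
      · rw [hp2]
    · rintro ⟨j, ⟨hjc, hadd⟩, rfl⟩
      have hC1 : r + 1 ≤ lam.colLen j := hCge j hjc
      have haddv : Addable lam (lam.colLen j, j) := jta_addable_iff.2 ⟨hadd, rfl⟩
      obtain ⟨m, hm1, hm2, hval⟩ := hx2 _ haddv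
      unfold alphaContent at hval
      have hlt : x m < x k := by
        rw [← hval, hxk]
        have hj1 : (j : ℝ) + 1 ≤ (c : ℝ) := by exact_mod_cast hjc
        have hC1' : (r : ℝ) + 1 ≤ (lam.colLen j : ℝ) := by exact_mod_cast hC1
        have haux : α * (j : ℝ) ≤ α * c := mul_le_mul_of_nonneg_left (by linarith) hα.le
        linarith
      have hmk : m ≤ k - 1 := by
        by_contra hmk
        push_neg at hmk
        rcases eq_or_lt_of_le (show k ≤ m by omega) with he | hl
        · rw [← he] at hlt
          exact absurd hlt (lt_irrefl _)
        · exact absurd hlt (not_lt.2 (hxmono k m hk1 hl hm2).le)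
      exact ⟨m, ⟨hm1, hmk⟩, hval.symm⟩
  -- the removable corners strictly above the new box
  have hYgt : (Finset.Icc k (d - 1)).image y
      = ((Finset.range r).filter (fun i => lam.colLen (lam.rowLen i - 1) = i + 1)).image
          (fun i : ℕ => α * (lam.rowLen i : ℝ) - ((i : ℝ) + 1)) := by
    ext t
    simp only [Finset.mem_image, Finset.mem_Icc, Finset.mem_filter, Finset.mem_range]
    constructor
    · rintro ⟨m, ⟨hm1, hm2⟩, rfl⟩
      obtain ⟨p, hrem, hval⟩ := hy1 m (by omega) hm2
      obtain ⟨hp1, hp2⟩ := jta_removable_iff.1 hrem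
      unfold upperAlphaContent at hval
      have hvgt : x k < y m := hxkylt m hm1 hm2
      rw [hxk] at hvgt
      rw [← hval] at hvgt ⊢
      have hpr : p.1 < r := by
        by_contra hge
        push_neg at hge
        have h1 : lam.rowLen p.1 ≤ lam.rowLen r := lam.rowLen_anti r p.1 hge
        have h2 : (p.2 : ℝ) + 1 ≤ (c : ℝ) := by
          have : p.2 + 1 ≤ c := by omega
          exact_mod_cast this
        have h3 : (r : ℝ) ≤ (p.1 : ℝ) := by exact_mod_cast hge
        have h4 : α * ((p.2 : ℝ) + 1) ≤ α * c := mul_le_mul_of_nonneg_left h2 hα.le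
        linarith
      refine ⟨p.1, ⟨hpr, ?_⟩, ?_⟩
      · rw [hp1]
        simpa using hp2
      · rw [hp1]
        push_cast
        ring
    · rintro ⟨i, ⟨hir, hrem⟩, rfl⟩
      have hR1 : c + 1 ≤ lam.rowLen i := hRge i hir
      have hremv : Removable lam (i, lam.rowLen i - 1) := by
        rw [jta_removable_iff]
        exact ⟨by show lam.rowLen i = lam.rowLen i - 1 + 1; omega, hrem⟩
      obtain ⟨m, hm1, hm2, hval⟩ := hy2 _ hremv
      unfold upperAlphaContent at hval
      have hcast : ((lam.rowLen i - 1 : ℕ) : ℝ) + 1 = (lam.rowLen i : ℝ) := by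
        rw [Nat.cast_sub (by omega)]; ring
      rw [hcast] at hval
      have hgt : x k < y m := by
        rw [← hval, hxk]
        have hR1' : (c : ℝ) + 1 ≤ (lam.rowLen i : ℝ) := by exact_mod_cast hR1
        have hi1 : (i : ℝ) + 1 ≤ (r : ℝ) := by exact_mod_cast hir
        have haux : α * ((c : ℝ) + 1) ≤ α * (lam.rowLen i : ℝ) :=
          mul_le_mul_of_nonneg_left hR1' hα.le
        linarith
      have hmk : k ≤ m := by
        by_contra hmk
        push_neg at hmk
        exact absurd hgt (not_lt.2 (hyltxk m hm1 (by omega)).le)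
      exact ⟨m, ⟨hmk, hm2⟩, hval.symm⟩
  -- the addable corners strictly above the new box
  have hXgt : (Finset.Icc (k + 1) d).image x
      = ((Finset.range r).filter (fun i => lam.colLen (lam.rowLen i) = i)).image
          (fun i : ℕ => α * (lam.rowLen i : ℝ) - (i : ℝ)) := by
    ext t
    simp only [Finset.mem_image, Finset.mem_Icc, Finset.mem_filter, Finset.mem_range]
    constructor
    · rintro ⟨m, ⟨hm1, hm2⟩, rfl⟩
      obtain ⟨p, hadd, hval⟩ := hx1 m (by omega) hm2
      obtain ⟨hp1, hp2⟩ := jta_addable_iff.1 hadd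
      unfold alphaContent at hval
      have hvgt : x k < x m := hxkxgt m hm1 hm2
      rw [hxk] at hvgt
      rw [← hval] at hvgt ⊢
      have hpr : p.1 < r := by
        by_contra hge
        push_neg at hge
        have h1 : lam.rowLen p.1 ≤ lam.rowLen r := lam.rowLen_anti r p.1 hge
        have h2 : (p.2 : ℝ) ≤ (c : ℝ) := by
          have : p.2 ≤ c := by omega
          exact_mod_cast this
        have h3 : (r : ℝ) ≤ (p.1 : ℝ) := by exact_mod_cast hge
        have h4 : α * (p.2 : ℝ) ≤ α * c := mul_le_mul_of_nonneg_left h2 hα.le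
        linarith
      refine ⟨p.1, ⟨hpr, ?_⟩, ?_⟩
      · rw [hp1]; exact hp2
      · rw [hp1]
    · rintro ⟨i, ⟨hir, hadd⟩, rfl⟩
      have hR1 : c + 1 ≤ lam.rowLen i := hRge i hir
      have haddv : Addable lam (i, lam.rowLen i) := jta_addable_iff.2 ⟨rfl, hadd⟩
      obtain ⟨m, hm1, hm2, hval⟩ := hx2 _ haddv
      unfold alphaContent at hval
      have hgt : x k < x m := by
        rw [← hval, hxk]
        have hR1' : (c : ℝ) + 1 ≤ (lam.rowLen i : ℝ) := by exact_mod_cast hR1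
        have hi1 : (i : ℝ) + 1 ≤ (r : ℝ) := by exact_mod_cast hir
        have haux : α * ((c : ℝ) + 1) ≤ α * (lam.rowLen i : ℝ) :=
          mul_le_mul_of_nonneg_left hR1' hα.le
        linarith
      have hmk : k + 1 ≤ m := by
        by_contra hmk
        push_neg at hmk
        rcases eq_or_lt_of_le (show m ≤ k by omega) with he | hl
        · rw [he] at hgt
          exact absurd hgt (lt_irrefl _)
        · exact absurd hgt (not_lt.2 (hxmono m k hm1 hl hk2).le)
      exact ⟨m, ⟨hmk, hm2⟩, hval.symm⟩
  -- injectivity of the corner-value maps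
  have humono : ∀ a b : ℕ, a < b →
      α * ((a : ℝ) + 1) - (lam.colLen a : ℝ) < α * ((b : ℝ) + 1) - (lam.colLen b : ℝ) := by
    intro a b hab
    have h1 : (lam.colLen b : ℝ) ≤ (lam.colLen a : ℝ) := by
      exact_mod_cast lam.colLen_anti a b hab.le
    have h2 : (a : ℝ) + 1 < (b : ℝ) + 1 := by
      have : (a : ℝ) < b := by exact_mod_cast hab
      linarith
    have h3 := mul_lt_mul_of_pos_left h2 hα
    linarith
  have huinj : ∀ a b : ℕ,
      α * ((a : ℝ) + 1) - (lam.colLen a : ℝ) = α * ((b : ℝ) + 1) - (lam.colLen b : ℝ) → a = b := by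
    intro a b h
    rcases lt_trichotomy a b with h' | h' | h'
    · exact absurd h (humono a b h').ne
    · exact h'
    · exact absurd h.symm (humono b a h').ne
  have hvmono : ∀ a b : ℕ, a < b →
      α * (a : ℝ) - (lam.colLen a : ℝ) < α * (b : ℝ) - (lam.colLen b : ℝ) := by
    intro a b hab
    have h1 : (lam.colLen b : ℝ) ≤ (lam.colLen a : ℝ) := by
      exact_mod_cast lam.colLen_anti a b hab.le
    have h2 : (a : ℝ) < (b : ℝ) := by exact_mod_cast hab
    have h3 := mul_lt_mul_of_pos_left h2 hα
    linarith
  have hvinj : ∀ a b : ℕ,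
      α * (a : ℝ) - (lam.colLen a : ℝ) = α * (b : ℝ) - (lam.colLen b : ℝ) → a = b := by
    intro a b h
    rcases lt_trichotomy a b with h' | h' | h'
    · exact absurd h (hvmono a b h').ne
    · exact h'
    · exact absurd h.symm (hvmono b a h').ne
  have hpmono : ∀ a b : ℕ, a < b →
      α * (lam.rowLen b : ℝ) - ((b : ℝ) + 1) < α * (lam.rowLen a : ℝ) - ((a : ℝ) + 1) := by
    intro a b hab
    have h1 : (lam.rowLen b : ℝ) ≤ (lam.rowLen a : ℝ) := by
      exact_mod_cast lam.rowLen_anti a b hab.le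
    have h2 : (a : ℝ) < (b : ℝ) := by exact_mod_cast hab
    have h3 : α * (lam.rowLen b : ℝ) ≤ α * (lam.rowLen a : ℝ) :=
      mul_le_mul_of_nonneg_left h1 hα.le
    linarith
  have hpinj : ∀ a b : ℕ,
      α * (lam.rowLen a : ℝ) - ((a : ℝ) + 1) = α * (lam.rowLen b : ℝ) - ((b : ℝ) + 1) → a = b := by
    intro a b h
    rcases lt_trichotomy a b with h' | h' | h'
    · exact absurd h.symm (hpmono a b h').ne
    · exact h'
    · exact absurd h (hpmono b a h').ne
  have hqmono : ∀ a b : ℕ, a < b →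
      α * (lam.rowLen b : ℝ) - (b : ℝ) < α * (lam.rowLen a : ℝ) - (a : ℝ) := by
    intro a b hab
    have h1 : (lam.rowLen b : ℝ) ≤ (lam.rowLen a : ℝ) := by
      exact_mod_cast lam.rowLen_anti a b hab.le
    have h2 : (a : ℝ) < (b : ℝ) := by exact_mod_cast hab
    have h3 : α * (lam.rowLen b : ℝ) ≤ α * (lam.rowLen a : ℝ) :=
      mul_le_mul_of_nonneg_left h1 hα.le
    linarith
  have hqinj : ∀ a b : ℕ,
      α * (lam.rowLen a : ℝ) - (a : ℝ) = α * (lam.rowLen b : ℝ) - (b : ℝ) → a = b := by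
    intro a b h
    rcases lt_trichotomy a b with h' | h' | h'
    · exact absurd h.symm (hqmono a b h').ne
    · exact h'
    · exact absurd h (hqmono b a h').ne
  -- injectivity of x and y on the index intervals
  have hyinj1 : ∀ a ∈ Finset.Icc 1 (k - 1), ∀ b ∈ Finset.Icc 1 (k - 1), y a = y b → a = b := by
    intro a ha b hb h
    simp only [Finset.mem_Icc] at ha hb
    rcases lt_trichotomy a b with h' | h' | h'
    · exact absurd h (hymono a b ha.1 h' (by omega)).ne
    · exact h'
    · exact absurd h.symm (hymono b a hb.1 h' (by omega)).ne
  have hxinj1 : ∀ a ∈ Finset.Icc 1 (k - 1), ∀ b ∈ Finset.Icc 1 (k - 1), x a = x b → a = b := by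
    intro a ha b hb h
    simp only [Finset.mem_Icc] at ha hb
    rcases lt_trichotomy a b with h' | h' | h'
    · exact absurd h (hxmono a b ha.1 h' (by omega)).ne
    · exact h'
    · exact absurd h.symm (hxmono b a hb.1 h' (by omega)).ne
  have hyinj2 : ∀ a ∈ Finset.Icc k (d - 1), ∀ b ∈ Finset.Icc k (d - 1), y a = y b → a = b := by
    intro a ha b hb h
    simp only [Finset.mem_Icc] at ha hb
    rcases lt_trichotomy a b with h' | h' | h'
    · exact absurd h (hymono a b (by omega) h' (by omega)).ne
    · exact h'
    · exact absurd h.symm (hymono b a (by omega) h' (by omega)).ne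
  have hxinj2 : ∀ a ∈ Finset.Icc (k + 1) d, ∀ b ∈ Finset.Icc (k + 1) d, x a = x b → a = b := by
    intro a ha b hb h
    simp only [Finset.mem_Icc] at ha hb
    rcases lt_trichotomy a b with h' | h' | h'
    · exact absurd h (hxmono a b (by omega) h' (by omega)).ne
    · exact h'
    · exact absurd h.symm (hxmono b a (by omega) h' (by omega)).ne
  -- translate the four index products into products over corner columns/rows
  have hP1 : (∏ m ∈ Finset.Icc 1 (k - 1), (x k - y m))
      = ∏ j ∈ (Finset.range c).filter (fun j => lam.rowLen (lam.colLen j - 1) = j + 1),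
          ((α * c - r) - (α * ((j : ℝ) + 1) - (lam.colLen j : ℝ))) := by
    have h1 := Finset.prod_image (f := fun t => x k - t) hyinj1
    rw [← h1, hYlt, Finset.prod_image (f := fun t => x k - t) (fun a _ b _ h => huinj a b h),
      hxk]
  have hP2 : (∏ m ∈ Finset.Icc 1 (k - 1), (x k - x m))
      = ∏ j ∈ (Finset.range c).filter (fun j => lam.rowLen (lam.colLen j) = j),
          ((α * c - r) - (α * (j : ℝ) - (lam.colLen j : ℝ))) := by
    have h1 := Finset.prod_image (f := fun t => x k - t) hxinj1
    rw [← h1, hXlt, Finset.prod_image (f := fun t => x k - t) (fun a _ b _ h => hvinj a b h),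
      hxk]
  have hP3 : (∏ m ∈ Finset.Icc k (d - 1), (x k - y m))
      = ∏ i ∈ (Finset.range r).filter (fun i => lam.colLen (lam.rowLen i - 1) = i + 1),
          ((α * c - r) - (α * (lam.rowLen i : ℝ) - ((i : ℝ) + 1))) := by
    have h1 := Finset.prod_image (f := fun t => x k - t) hyinj2
    rw [← h1, hYgt, Finset.prod_image (f := fun t => x k - t) (fun a _ b _ h => hpinj a b h),
      hxk]
  have hP4 : (∏ m ∈ Finset.Icc (k + 1) d, (x k - x m))
      = ∏ i ∈ (Finset.range r).filter (fun i => lam.colLen (lam.rowLen i) = i),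
          ((α * c - r) - (α * (lam.rowLen i : ℝ) - (i : ℝ))) := by
    have h1 := Finset.prod_image (f := fun t => x k - t) hxinj2
    rw [← h1, hXgt, Finset.prod_image (f := fun t => x k - t) (fun a _ b _ h => hqinj a b h),
      hxk]
  -- reindex the second product of the right-hand side
  have hsetind : Finset.Icc (k + 1) d = (Finset.Icc k (d - 1)).image (fun m => m + 1) := by
    ext j
    simp only [Finset.mem_Icc, Finset.mem_image]
    constructor
    · intro h
      exact ⟨j - 1, ⟨by omega, by omega⟩, by omega⟩
    · rintro ⟨m, hm, rfl⟩
      omega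
  have hreindex : (∏ j ∈ Finset.Icc (k + 1) d, (x k - y (j - 1)))
      = ∏ m ∈ Finset.Icc k (d - 1), (x k - y m) := by
    rw [hsetind, Finset.prod_image (fun a _ b _ h => by omega)]
    exact Finset.prod_congr rfl (fun m _ => by simp)
  -- put everything together
  rw [jta_step1 α hα lam Λ r c hr hcl hnotin hΛ,
    jta_rowprod α hα lam r c hr hcl, jta_colprod α hα lam r c hr hcl,
    Finset.prod_div_distrib, Finset.prod_div_distrib, hreindex, hP1, hP2, hP3, hP4]
  ring
end
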